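/- arXiv:2604.11644 — 5 statements merged into one kernel-verified Lean document; each statement's English description precedes it below -/
import Mathlib

section
/- Let G and H be connected simple graphs with |V(G)| = m ≥ 3 and |V(H)| = n ≥ 3. Then the 3-restricted edge-connectivity of the strong product satisfies λ₃(G ⊠ H) ≤ min{(n + 2e(H))·λ(G), (m + 2e(G))·λ(H)}, where e(·) denotes the number of edges and λ(·) the edge-connectivity. -/
open SimpleGraph

/-- The strong product of two simple graphs. -/
def strongProd {α β : Type*} (G : SimpleGraph α) (H : SimpleGraph β) :
    SimpleGraph (α × β) where
  Adj p q := (p.1 = q.1 ∧ H.Adj p.2 q.2) ∨ (p.2 = q.2 ∧ G.Adj p.1 q.1) ∨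
    (G.Adj p.1 q.1 ∧ H.Adj p.2 q.2)
  symm := by
    constructor
    rintro ⟨a, b⟩ ⟨c, d⟩ (⟨h1, h2⟩ | ⟨h1, h2⟩ | ⟨h1, h2⟩)
    · exact Or.inl ⟨h1.symm, h2.symm⟩
    · exact Or.inr (Or.inl ⟨h1.symm, h2.symm⟩)
    · exact Or.inr (Or.inr ⟨h1.symm, h2.symm⟩)
  loopless := by
    constructor
    rintro ⟨a, b⟩ (⟨h1, h2⟩ | ⟨h1, h2⟩ | ⟨h1, h2⟩)
    · exact H.irrefl h2
    · exact G.irrefl h2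
    · exact G.irrefl h1

variable {V : Type*}

/-- The degree of a vertex. -/
noncomputable def deg (G : SimpleGraph V) (v : V) : ℕ := (G.neighborSet v).ncard

/-- The minimum degree δ(G). -/
noncomputable def minDeg (G : SimpleGraph V) : ℕ := sInf {k | ∃ v, deg G v = k}

/-- The number of edges e(G). -/
noncomputable def numEdges (G : SimpleGraph V) : ℕ := G.edgeSet.ncard

/-- An edge-cut: a set of edges whose deletion disconnects the graph. -/
def IsEdgeCut (G : SimpleGraph V) (S : Set (Sym2 V)) : Prop :=
  S ⊆ G.edgeSet ∧ ¬ (G.deleteEdges S).Connected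

/-- The edge-connectivity λ(G). -/
noncomputable def edgeConn (G : SimpleGraph V) : ℕ :=
  sInf {k | ∃ S : Set (Sym2 V), IsEdgeCut G S ∧ S.ncard = k}

/-- A k-restricted edge-cut: an edge-cut such that every component of the
resulting graph has at least k vertices. -/
def IsKRestrictedEdgeCut (G : SimpleGraph V) (k : ℕ) (S : Set (Sym2 V)) : Prop :=
  S ⊆ G.edgeSet ∧ ¬ (G.deleteEdges S).Connected ∧
    ∀ c : (G.deleteEdges S).ConnectedComponent, k ≤ c.supp.ncard

/-- The k-restricted edge-connectivity λ_k(G), equal to +∞ (⊤) if no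
k-restricted edge-cut exists. -/
noncomputable def lamK (G : SimpleGraph V) (k : ℕ) : ℕ∞ :=
  sInf {n : ℕ∞ | ∃ S : Set (Sym2 V), IsKRestrictedEdgeCut G k S ∧ (S.ncard : ℕ∞) = n}

/-- The edge boundary ∂_G(X) = [X, V(G)\X]: edges with exactly one endpoint in X. -/
def edgeBoundary (G : SimpleGraph V) (X : Set V) : Set (Sym2 V) :=
  {e | e ∈ G.edgeSet ∧ ∃ u v, e = s(u, v) ∧ u ∈ X ∧ v ∉ X}

/-- The minimum edge-degree ξ(G) = min over edges uv of d(u) + d(v) - 2. -/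
noncomputable def xiMin (G : SimpleGraph V) : ℕ :=
  sInf {k | ∃ u v, G.Adj u v ∧ k = deg G u + deg G v - 2}

/-- ξ₃(G): minimum size of ∂_G(X) over connected induced subgraphs on 3 vertices. -/
noncomputable def xi3 (G : SimpleGraph V) : ℕ :=
  sInf {k | ∃ X : Set V, X.ncard = 3 ∧ (G.induce X).Connected ∧
    k = (edgeBoundary G X).ncard}

/-- K₂ ⊙ H: the strong product K₂ ⊠ H minus the edges inside the two H-layers.
The two vertices of K₂ are represented by `false` (= a) and `true` (= b). -/
def odotK2 {β : Type*} (H : SimpleGraph β) : SimpleGraph (Bool × β) where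
  Adj p q := p.1 ≠ q.1 ∧ (p.2 = q.2 ∨ H.Adj p.2 q.2)
  symm := by
    constructor
    rintro ⟨a, y⟩ ⟨b, z⟩ ⟨h1, h2⟩
    exact ⟨h1.symm, h2.elim (fun h => Or.inl h.symm) (fun h => Or.inr h.symm)⟩
  loopless := by
    constructor
    rintro ⟨a, y⟩ ⟨h1, _⟩
    exact h1 rfl


section AuxProof

open SimpleGraph

variable {α β γ : Type*}

/-- The graph on `α` whose edge set is a given set `S` of edges of `G`. -/
private def cutGraph (G : SimpleGraph α) (S : Set (Sym2 α)) (hS : S ⊆ G.edgeSet) :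
    SimpleGraph α where
  Adj u v := s(u, v) ∈ S
  symm := by
    constructor
    intro u v h
    rwa [Sym2.eq_swap] at h
  loopless := by
    constructor
    intro u h
    exact G.irrefl ((SimpleGraph.mem_edgeSet G).mp (hS h))

private lemma cutGraph_edgeSet (G : SimpleGraph α) (S : Set (Sym2 α)) (hS : S ⊆ G.edgeSet) :
    (cutGraph G S hS).edgeSet = S := by
  ext e
  refine e.ind fun u v => ?_
  rw [SimpleGraph.mem_edgeSet]
  exact Iff.rfl

/-- The lift of the graph `GS` (together with "diagonal-or-`H`-edge" in the
second coordinate) to `γ` via the equivalence `e`. -/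
private def liftGraph (GS : SimpleGraph α) (H : SimpleGraph β) (e : γ ≃ α × β) :
    SimpleGraph γ where
  Adj p q := GS.Adj (e p).1 (e q).1 ∧ ((e p).2 = (e q).2 ∨ H.Adj (e p).2 (e q).2)
  symm := by
    constructor
    rintro p q ⟨h1, h2⟩
    exact ⟨h1.symm, h2.imp Eq.symm fun h => h.symm⟩
  loopless := by
    constructor
    rintro p ⟨h1, -⟩
    exact GS.irrefl h1

private def dartEquiv (GS : SimpleGraph α) (H : SimpleGraph β) (e : γ ≃ α × β) :
    (liftGraph GS H e).Dart ≃ GS.Dart × {p : β × β // p.1 = p.2 ∨ H.Adj p.1 p.2} where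
  toFun d := (⟨((e d.fst).1, (e d.snd).1), d.adj.1⟩, ⟨((e d.fst).2, (e d.snd).2), d.adj.2⟩)
  invFun x := ⟨(e.symm (x.1.fst, x.2.val.1), e.symm (x.1.snd, x.2.val.2)), by
    show GS.Adj _ _ ∧ _
    simp only [Equiv.apply_symm_apply]
    exact ⟨x.1.adj, x.2.prop⟩⟩
  left_inv d := by
    apply SimpleGraph.Dart.ext
    simp [Prod.ext_iff]
  right_inv x := by
    obtain ⟨⟨⟨u, v⟩, h⟩, ⟨⟨y, z⟩, hp⟩⟩ := x
    simp [SimpleGraph.Dart.ext_iff, Prod.ext_iff, Subtype.ext_iff]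

private def pairEquiv (H : SimpleGraph β) [DecidableEq β] :
    {p : β × β // p.1 = p.2 ∨ H.Adj p.1 p.2} ≃ β ⊕ H.Dart where
  toFun x := if h : x.val.1 = x.val.2 then Sum.inl x.val.1
    else Sum.inr ⟨x.val, x.prop.resolve_left h⟩
  invFun x := match x with
    | Sum.inl y => ⟨(y, y), Or.inl rfl⟩
    | Sum.inr d => ⟨d.toProd, Or.inr d.adj⟩
  left_inv := by
    rintro ⟨⟨y, z⟩, hp⟩
    dsimp only
    split_ifs with h
    · cases h; rfl
    · rfl
  right_inv := by
    rintro (y | d)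
    · simp
    · dsimp only
      rw [dif_neg (H.ne_of_adj d.adj)]

private lemma edgeFinset_card_eq_ncard {δ : Type*} [Fintype δ] (K : SimpleGraph δ)
    [Fintype K.edgeSet] [DecidableEq δ] [DecidableRel K.Adj] :
    K.edgeFinset.card = K.edgeSet.ncard := by
  rw [SimpleGraph.edgeFinset_card, ← Nat.card_coe_set_eq, Nat.card_eq_fintype_card]

private lemma key [Fintype α] [Fintype β] [Fintype γ]
    (G : SimpleGraph α) (H : SimpleGraph β) (P : SimpleGraph γ) (e : γ ≃ α × β)
    (hadj : ∀ p q, P.Adj p q ↔ (strongProd G H).Adj (e p) (e q))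
    (hG : G.Connected) (hH : H.Connected)
    (hm : 2 ≤ Fintype.card α) (hn : 3 ≤ Fintype.card β) :
    lamK P 3 ≤ (((Fintype.card β + 2 * numEdges H) * edgeConn G : ℕ) : ℕ∞) := by
  classical
  have hαne : Nonempty α := Fintype.card_pos_iff.mp (by omega)
  have hβne : Nonempty β := Fintype.card_pos_iff.mp (by omega)
  -- a minimum edge cut of G exists
  have hne : {k | ∃ S : Set (Sym2 α), IsEdgeCut G S ∧ S.ncard = k}.Nonempty := by
    refine ⟨G.edgeSet.ncard, G.edgeSet, ⟨le_refl _, ?_⟩, rfl⟩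
    intro hc
    obtain ⟨u, v, huv⟩ := Fintype.exists_pair_of_one_lt_card (by omega : 1 < Fintype.card α)
    obtain ⟨w⟩ := hc.preconnected u v
    cases w with
    | nil => exact huv rfl
    | cons h _ =>
      obtain ⟨ha, hm⟩ := SimpleGraph.deleteEdges_adj.mp h
      exact hm ((SimpleGraph.mem_edgeSet _).mpr ha)
  obtain ⟨S, hScut, hScard⟩ := Nat.sInf_mem hne
  have hS : S ⊆ G.edgeSet := hScut.1
  set GS := cutGraph G S hS with hGS
  set L := liftGraph GS H e with hL
  set T := L.edgeSet with hT
  -- T is a set of edges of P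
  have hTsub : T ⊆ P.edgeSet := by
    intro f hf
    refine f.ind (fun p q hf => ?_) hf
    obtain ⟨h1, h2⟩ := (SimpleGraph.mem_edgeSet _).mp hf
    have hG' : G.Adj (e p).1 (e q).1 := (SimpleGraph.mem_edgeSet G).mp (hS h1)
    rw [SimpleGraph.mem_edgeSet, hadj]
    rcases h2 with h2 | h2
    · exact Or.inr (Or.inl ⟨h2, hG'⟩)
    · exact Or.inr (Or.inr ⟨hG', h2⟩)
  -- walks in P - T project to walks in G - S
  have proj : ∀ {p q : γ}, (P.deleteEdges T).Walk p q →
      (G.deleteEdges S).Reachable (e p).1 (e q).1 := by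
    intro p q w
    induction w with
    | nil => exact SimpleGraph.Reachable.refl _
    | @cons a b c h _ ih =>
      obtain ⟨hPab, hnotT⟩ := SimpleGraph.deleteEdges_adj.mp h
      have step : (G.deleteEdges S).Reachable (e a).1 (e b).1 := by
        rcases (hadj a b).mp hPab with ⟨h1, h2⟩ | ⟨h1, h2⟩ | ⟨h1, h2⟩
        · rw [h1]
        · have hnS : s((e a).1, (e b).1) ∉ S := fun hin =>
            hnotT ((SimpleGraph.mem_edgeSet _).mpr ⟨hin, Or.inl h1⟩)
          exact SimpleGraph.Adj.reachable (SimpleGraph.deleteEdges_adj.mpr ⟨h2, hnS⟩)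
        · have hnS : s((e a).1, (e b).1) ∉ S := fun hin =>
            hnotT ((SimpleGraph.mem_edgeSet _).mpr ⟨hin, Or.inr h2⟩)
          exact SimpleGraph.Adj.reachable (SimpleGraph.deleteEdges_adj.mpr ⟨h1, hnS⟩)
      exact step.trans ih
  -- within a layer {u} x β, everything is connected in P - T
  have layer : ∀ (u : α) {y z : β}, H.Walk y z →
      (P.deleteEdges T).Reachable (e.symm (u, y)) (e.symm (u, z)) := by
    intro u y z w
    induction w with
    | nil => exact SimpleGraph.Reachable.refl _
    | @cons a b c h _ ih =>
      refine (SimpleGraph.Adj.reachable ?_).trans ih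
      rw [SimpleGraph.deleteEdges_adj]
      constructor
      · rw [hadj]
        left
        constructor <;> simp [h]
      · intro hmem
        have h1 := ((SimpleGraph.mem_edgeSet _).mp hmem).1
        have h2 : s(u, u) ∈ S := by
          have : GS.Adj (e (e.symm (u, a))).1 (e (e.symm (u, b))).1 := h1
          exact (by simpa only [Equiv.apply_symm_apply] using this : GS.Adj u u)
        exact G.irrefl ((SimpleGraph.mem_edgeSet G).mp (hS h2))
  -- P - T is disconnected
  have hnc : ¬ (P.deleteEdges T).Connected := by
    intro hc
    have hnp : ¬ (G.deleteEdges S).Preconnected := fun hp => hScut.2 ((SimpleGraph.connected_iff _).mpr ⟨hp, hαne⟩)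
    simp only [SimpleGraph.Preconnected, not_forall] at hnp
    obtain ⟨u, v, huv⟩ := hnp
    obtain ⟨y0⟩ := hβne
    obtain ⟨w⟩ := hc.preconnected (e.symm (u, y0)) (e.symm (v, y0))
    have hr := proj w
    simp only [Equiv.apply_symm_apply] at hr
    exact huv hr
  -- every component of P - T has at least card β >= 3 vertices
  have hcomp : ∀ c : (P.deleteEdges T).ConnectedComponent, 3 ≤ c.supp.ncard := by
    intro c
    obtain ⟨p, rfl⟩ := c.exists_rep
    have hrp : ∀ z : β, (P.deleteEdges T).Reachable p (e.symm ((e p).1, z)) := by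
      intro z
      obtain ⟨w⟩ := hH.preconnected (e p).2 z
      have hr := layer (e p).1 w
      rwa [Prod.mk.eta, Equiv.symm_apply_apply] at hr
    have hsub : (fun z : β => e.symm ((e p).1, z)) '' Set.univ ⊆
        ((P.deleteEdges T).connectedComponentMk p).supp := by
      rintro _ ⟨z, -, rfl⟩
      exact SimpleGraph.ConnectedComponent.sound (hrp z).symm
    have hinj : Function.Injective (fun z : β => e.symm ((e p).1, z)) := by
      intro a b hab
      exact (Prod.ext_iff.mp (e.symm.injective hab)).2
    have himg : ((fun z : β => e.symm ((e p).1, z)) '' Set.univ).ncard = Fintype.card β := by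
      rw [Set.ncard_image_of_injective _ hinj, Set.ncard_univ, Nat.card_eq_fintype_card]
    calc 3 ≤ Fintype.card β := hn
      _ = ((fun z : β => e.symm ((e p).1, z)) '' Set.univ).ncard := himg.symm
      _ ≤ _ := Set.ncard_le_ncard hsub (Set.toFinite _)
  -- the cardinality of T
  have hGScard : Fintype.card GS.Dart = 2 * S.ncard := by
    rw [SimpleGraph.dart_card_eq_twice_card_edges, edgeFinset_card_eq_ncard,
      cutGraph_edgeSet]
  have hPairCard : Fintype.card {p : β × β // p.1 = p.2 ∨ H.Adj p.1 p.2} =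
      Fintype.card β + 2 * numEdges H := by
    rw [Fintype.card_congr (pairEquiv H), Fintype.card_sum,
      SimpleGraph.dart_card_eq_twice_card_edges, edgeFinset_card_eq_ncard]
    rfl
  have hLdart : Fintype.card L.Dart = 2 * S.ncard * (Fintype.card β + 2 * numEdges H) := by
    rw [Fintype.card_congr (dartEquiv GS H e), Fintype.card_prod, hGScard, hPairCard]
  have hTcard : T.ncard = (Fintype.card β + 2 * numEdges H) * S.ncard := by
    have h1 : Fintype.card L.Dart = 2 * L.edgeFinset.card :=
      SimpleGraph.dart_card_eq_twice_card_edges L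
    rw [edgeFinset_card_eq_ncard, ← hT] at h1
    have h2 : 2 * T.ncard = 2 * ((Fintype.card β + 2 * numEdges H) * S.ncard) := by
      rw [← h1, hLdart]; ring
    omega
  -- conclude
  have hmem : (((Fintype.card β + 2 * numEdges H) * edgeConn G : ℕ) : ℕ∞) ∈
      {n : ℕ∞ | ∃ S' : Set (Sym2 γ), IsKRestrictedEdgeCut P 3 S' ∧ (S'.ncard : ℕ∞) = n} :=
    ⟨T, ⟨hTsub, hnc, hcomp⟩, by rw [hTcard, hScard]; rfl⟩
  exact sInf_le hmem

end AuxProof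

/-- For connected graphs G, H of orders m ≥ 3 and n ≥ 3,
λ₃(G ⊠ H) ≤ min{(n + 2e(H))λ(G), (m + 2e(G))λ(H)}. -/
theorem stmt0 {α β : Type*} [Fintype α] [Fintype β]
    (G : SimpleGraph α) (H : SimpleGraph β)
    (hG : G.Connected) (hH : H.Connected)
    (hm : 3 ≤ Fintype.card α) (hn : 3 ≤ Fintype.card β) :
    lamK (strongProd G H) 3 ≤
      ((min ((Fintype.card β + 2 * numEdges H) * edgeConn G)
            ((Fintype.card α + 2 * numEdges G) * edgeConn H) : ℕ) : ℕ∞) := by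
  have h1 := key G H (strongProd G H) (Equiv.refl _) (fun p q => Iff.rfl) hG hH
    (by omega) hn
  have h2 := key H G (strongProd G H) (Equiv.prodComm α β) (fun p q => by
    show ((p.1 = q.1 ∧ H.Adj p.2 q.2) ∨ (p.2 = q.2 ∧ G.Adj p.1 q.1) ∨
        (G.Adj p.1 q.1 ∧ H.Adj p.2 q.2)) ↔
      ((p.2 = q.2 ∧ G.Adj p.1 q.1) ∨ (p.1 = q.1 ∧ H.Adj p.2 q.2) ∨
        (H.Adj p.2 q.2 ∧ G.Adj p.1 q.1))
    tauto) hH hG (by omega) hm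
  rcases min_cases ((Fintype.card β + 2 * numEdges H) * edgeConn G)
      ((Fintype.card α + 2 * numEdges G) * edgeConn H) with ⟨hmin, -⟩ | ⟨hmin, -⟩ <;>
    rw [hmin]
  · exact h1
  · exact h2
end

section
/- Let G and H be connected simple graphs of order m ≥ 3 and n ≥ 3 respectively, let S be a minimum 3-restricted edge-cut of G ⊠ H, and let D₁, D₂ be the two components of (G ⊠ H) − S. If every vertex x ∈ V(G) satisfies that the H-layer H^x intersects both D₁ and D₂, then |S| ≥ (m + 2e(G))·λ(H); if every vertex y ∈ V(H) satisfies that the G-layer G^y intersects both D₁ and D₂, then |S| ≥ (n + 2e(H))·λ(G). -/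
open SimpleGraph

variable {V : Type*}

-- auxiliary development, part 1
section Aux
variable {β : Type*} [Fintype β]

/-- Ordered-pair version of the edge boundary. -/
def bord (H : SimpleGraph β) (X : Set β) : Set (β × β) :=
  {p | H.Adj p.1 p.2 ∧ p.1 ∈ X ∧ p.2 ∉ X}

lemma walk_mem_iff (H : SimpleGraph β) (X : Set β) {a b : β}
    (w : (H.deleteEdges (edgeBoundary H X)).Walk a b) : a ∈ X ↔ b ∈ X := by
  induction w with
  | nil => exact Iff.rfl
  | @cons u v c h p ih =>
    rw [SimpleGraph.deleteEdges_adj] at h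
    obtain ⟨hadj, hnot⟩ := h
    refine Iff.trans ?_ ih
    constructor
    · intro hu
      by_contra hv
      exact hnot ⟨H.mem_edgeSet.mpr hadj, u, v, rfl, hu, hv⟩
    · intro hv
      by_contra hu
      exact hnot ⟨H.mem_edgeSet.mpr hadj, v, u, Sym2.eq_swap, hv, hu⟩

lemma edgeConn_le_bord (H : SimpleGraph β) (X : Set β)
    (hX : X.Nonempty) (hXc : Xᶜ.Nonempty) :
    edgeConn H ≤ (bord H X).ncard := by
  obtain ⟨a, ha⟩ := hX
  obtain ⟨b, hb⟩ := hXc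
  have hcut : IsEdgeCut H (edgeBoundary H X) := by
    refine ⟨fun e he => he.1, fun hconn => ?_⟩
    obtain ⟨w⟩ := hconn.preconnected a b
    exact hb ((walk_mem_iff H X w).mp ha)
  have h1 : edgeConn H ≤ (edgeBoundary H X).ncard :=
    Nat.sInf_le ⟨edgeBoundary H X, hcut, rfl⟩
  have h2 : edgeBoundary H X ⊆ (fun p : β × β => s(p.1, p.2)) '' bord H X := by
    rintro e ⟨he, u, v, rfl, hu, hv⟩
    exact ⟨(u, v), ⟨H.mem_edgeSet.mp he, hu, hv⟩, rfl⟩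
  calc edgeConn H ≤ (edgeBoundary H X).ncard := h1
    _ ≤ ((fun p : β × β => s(p.1, p.2)) '' bord H X).ncard :=
        Set.ncard_le_ncard h2 (Set.toFinite _)
    _ ≤ (bord H X).ncard := Set.ncard_image_le (Set.toFinite _)

end Aux
section Aux2
variable {β : Type*} [Fintype β]

lemma swap_injOn (s : Set (β × β)) : Set.InjOn (fun p : β × β => (p.2, p.1)) s := by
  rintro ⟨a, b⟩ _ ⟨c, d⟩ _ h
  simp only [Prod.mk.injEq] at h
  simp [h.1, h.2]

lemma lemA (H : SimpleGraph β) (B B' : Set β)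
    (hB : B.Nonempty) (hB' : B'.Nonempty) (hBc : Bᶜ.Nonempty) (hB'c : B'ᶜ.Nonempty) :
    2 * edgeConn H ≤
      {p : β × β | (p.1 = p.2 ∨ H.Adj p.1 p.2) ∧ p.1 ∈ B ∧ p.2 ∉ B'}.ncard +
      {p : β × β | (p.1 = p.2 ∨ H.Adj p.1 p.2) ∧ p.1 ∉ B ∧ p.2 ∈ B'}.ncard := by
  classical
  set lam := edgeConn H with hlam
  set E₁ : Set (β × β) := {p | H.Adj p.1 p.2 ∧ p.1 ∈ B ∧ p.2 ∉ B'} with hE₁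
  set E₂ : Set (β × β) := {p | H.Adj p.1 p.2 ∧ p.1 ∉ B ∧ p.2 ∈ B'} with hE₂
  set dg₁ : Set (β × β) := (fun y => (y, y)) '' (B \ B') with hdg₁
  set dg₂ : Set (β × β) := (fun y => (y, y)) '' (B' \ B) with hdg₂
  have hset1 : {p : β × β | (p.1 = p.2 ∨ H.Adj p.1 p.2) ∧ p.1 ∈ B ∧ p.2 ∉ B'}
      = dg₁ ∪ E₁ := by
    ext ⟨y, z⟩
    simp only [Set.mem_setOf_eq, Set.mem_union, hdg₁, hE₁, Set.mem_image, Set.mem_diff]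
    constructor
    · rintro ⟨(h | h), hy, hz⟩
      · subst h
        exact Or.inl ⟨y, ⟨hy, hz⟩, rfl⟩
      · exact Or.inr ⟨h, hy, hz⟩
    · rintro (⟨w, ⟨hw1, hw2⟩, heq⟩ | ⟨h, hy, hz⟩)
      · cases heq
        exact ⟨Or.inl rfl, hw1, hw2⟩
      · exact ⟨Or.inr h, hy, hz⟩
  have hset2 : {p : β × β | (p.1 = p.2 ∨ H.Adj p.1 p.2) ∧ p.1 ∉ B ∧ p.2 ∈ B'}
      = dg₂ ∪ E₂ := by
    ext ⟨y, z⟩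
    simp only [Set.mem_setOf_eq, Set.mem_union, hdg₂, hE₂, Set.mem_image, Set.mem_diff]
    constructor
    · rintro ⟨(h | h), hy, hz⟩
      · subst h
        exact Or.inl ⟨y, ⟨hz, hy⟩, rfl⟩
      · exact Or.inr ⟨h, hy, hz⟩
    · rintro (⟨w, ⟨hw1, hw2⟩, heq⟩ | ⟨h, hy, hz⟩)
      · cases heq
        exact ⟨Or.inl rfl, hw2, hw1⟩
      · exact ⟨Or.inr h, hy, hz⟩
  have hd1 : Disjoint dg₁ E₁ := by
    rw [Set.disjoint_left]
    rintro p ⟨w, _, rfl⟩ ⟨hadj, _⟩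
    exact H.irrefl hadj
  have hd2 : Disjoint dg₂ E₂ := by
    rw [Set.disjoint_left]
    rintro p ⟨w, _, rfl⟩ ⟨hadj, _⟩
    exact H.irrefl hadj
  rw [hset1, hset2, Set.ncard_union_eq hd1 (Set.toFinite _) (Set.toFinite _),
    Set.ncard_union_eq hd2 (Set.toFinite _) (Set.toFinite _)]
  have hsplit : ∀ s t : Set (β × β), s.ncard = (s ∩ t).ncard + (s \ t).ncard :=
    fun s t => (Set.ncard_inter_add_ncard_diff_eq_ncard s t (Set.toFinite _)).symm
  rcases Set.eq_empty_or_nonempty (B ∩ B') with hBB | hBB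
  · -- B and B' disjoint
    obtain ⟨b, hb⟩ := hB
    obtain ⟨b', hb'⟩ := hB'
    have hdisj : ∀ z, z ∈ B → z ∉ B' := fun z h1 h2 =>
      Set.eq_empty_iff_forall_notMem.mp hBB z ⟨h1, h2⟩
    have hbb' : b ≠ b' := fun h => hdisj b hb (h ▸ hb')
    have h1 : lam ≤ dg₂.ncard + E₁.ncard := by
      refine (edgeConn_le_bord H {b} ⟨b, rfl⟩ ⟨b', hbb'.symm⟩).trans ?_
      rw [hsplit (bord H {b}) {p | p.2 ∈ B'}]
      refine Nat.add_le_add ?_ ?_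
      · refine Set.ncard_le_ncard_of_injOn (fun p => (p.2, p.2)) ?_ ?_ (Set.toFinite _)
        · rintro ⟨y, z⟩ ⟨⟨hadj, hy, _⟩, hz⟩
          exact ⟨z, ⟨hz, fun h => hdisj z h hz⟩, rfl⟩
        · rintro ⟨y, z⟩ ⟨⟨_, hy, _⟩, _⟩ ⟨y', z'⟩ ⟨⟨_, hy', _⟩, _⟩ h
          simp only [Prod.mk.injEq] at h
          simp only [Set.mem_singleton_iff] at hy hy'
          simp [hy, hy', h.1]
      · refine Set.ncard_le_ncard_of_injOn id ?_ (Function.injective_id.injOn) (Set.toFinite _)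
        rintro ⟨y, z⟩ ⟨⟨hadj, hy, _⟩, hz⟩
        simp only [Set.mem_singleton_iff] at hy
        exact ⟨hadj, hy ▸ hb, hz⟩
    have h2 : lam ≤ dg₁.ncard + E₂.ncard := by
      refine (edgeConn_le_bord H {b'} ⟨b', rfl⟩ ⟨b, hbb'⟩).trans ?_
      rw [hsplit (bord H {b'}) {p | p.2 ∈ B}]
      refine Nat.add_le_add ?_ ?_
      · refine Set.ncard_le_ncard_of_injOn (fun p => (p.2, p.2)) ?_ ?_ (Set.toFinite _)
        · rintro ⟨y, z⟩ ⟨⟨hadj, hy, _⟩, hz⟩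
          exact ⟨z, ⟨hz, hdisj z hz⟩, rfl⟩
        · rintro ⟨y, z⟩ ⟨⟨_, hy, _⟩, _⟩ ⟨y', z'⟩ ⟨⟨_, hy', _⟩, _⟩ h
          simp only [Prod.mk.injEq] at h
          simp only [Set.mem_singleton_iff] at hy hy'
          simp [hy, hy', h.1]
      · refine Set.ncard_le_ncard_of_injOn (fun p => (p.2, p.1)) ?_ (swap_injOn _) (Set.toFinite _)
        rintro ⟨y, z⟩ ⟨⟨hadj, hy, _⟩, hz⟩
        simp only [Set.mem_singleton_iff] at hy
        exact ⟨hadj.symm, hz, hy ▸ hb'⟩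
    omega
  · rcases Set.eq_empty_or_nonempty ((B ∪ B')ᶜ) with hU | hU
    · -- B ∪ B' = univ
      have hUniv : ∀ z, z ∉ B → z ∈ B' := by
        intro z hz
        by_contra h
        exact Set.eq_empty_iff_forall_notMem.mp hU z (by simp [hz, h])
      obtain ⟨u, hu⟩ := hB'c
      obtain ⟨v, hv⟩ := hBc
      have huB : u ∈ B := by
        by_contra h; exact hu (hUniv u h)
      have hvB' : v ∈ B' := hUniv v hv
      have huv : u ≠ v := fun h => hu (h ▸ hvB')
      have h1 : lam ≤ E₁.ncard + dg₂.ncard := by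
        refine (edgeConn_le_bord H {u} ⟨u, rfl⟩ ⟨v, huv.symm⟩).trans ?_
        rw [hsplit (bord H {u}) {p | p.2 ∈ B}]
        refine Nat.add_le_add ?_ ?_
        · refine Set.ncard_le_ncard_of_injOn (fun p => (p.2, p.1)) ?_ (swap_injOn _) (Set.toFinite _)
          rintro ⟨y, z⟩ ⟨⟨hadj, hy, _⟩, hz⟩
          simp only [Set.mem_singleton_iff] at hy
          exact ⟨hadj.symm, hz, hy ▸ hu⟩
        · refine Set.ncard_le_ncard_of_injOn (fun p => (p.2, p.2)) ?_ ?_ (Set.toFinite _)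
          · rintro ⟨y, z⟩ ⟨⟨hadj, hy, _⟩, hz⟩
            exact ⟨z, ⟨hUniv z hz, hz⟩, rfl⟩
          · rintro ⟨y, z⟩ ⟨⟨_, hy, _⟩, _⟩ ⟨y', z'⟩ ⟨⟨_, hy', _⟩, _⟩ h
            simp only [Prod.mk.injEq] at h
            simp only [Set.mem_singleton_iff] at hy hy'
            simp [hy, hy', h.1]
      have h2 : lam ≤ E₂.ncard + dg₁.ncard := by
        refine (edgeConn_le_bord H {v} ⟨v, rfl⟩ ⟨u, huv⟩).trans ?_
        rw [hsplit (bord H {v}) {p | p.2 ∈ B'}]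
        refine Nat.add_le_add ?_ ?_
        · refine Set.ncard_le_ncard_of_injOn id ?_ (Function.injective_id.injOn) (Set.toFinite _)
          rintro ⟨y, z⟩ ⟨⟨hadj, hy, _⟩, hz⟩
          simp only [Set.mem_singleton_iff] at hy
          exact ⟨hadj, hy ▸ hv, hz⟩
        · refine Set.ncard_le_ncard_of_injOn (fun p => (p.2, p.2)) ?_ ?_ (Set.toFinite _)
          · rintro ⟨y, z⟩ ⟨⟨hadj, hy, _⟩, hz⟩
            refine ⟨z, ⟨?_, hz⟩, rfl⟩
            by_contra h
            exact hz (hUniv z h)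
          · rintro ⟨y, z⟩ ⟨⟨_, hy, _⟩, _⟩ ⟨y', z'⟩ ⟨⟨_, hy', _⟩, _⟩ h
            simp only [Prod.mk.injEq] at h
            simp only [Set.mem_singleton_iff] at hy hy'
            simp [hy, hy', h.1]
      omega
    · -- main case: B ∩ B' nonempty and B ∪ B' proper
      have hIc : (B ∩ B')ᶜ.Nonempty := by
        obtain ⟨c, hc⟩ := hBc
        exact ⟨c, fun h => hc h.1⟩
      have hUn : (B ∪ B').Nonempty := hB.mono Set.subset_union_left
      have hbord1 := edgeConn_le_bord H (B ∩ B') hBB hIc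
      have hbord2 := edgeConn_le_bord H (B ∪ B') hUn hU
      set T : Set (β × β) := {p | p.1 ∈ B'} with hT
      have a1 : (bord H (B ∩ B') ∩ {p | p.2 ∈ B'}).ncard ≤ (E₂ ∩ T).ncard := by
        refine Set.ncard_le_ncard_of_injOn (fun p => (p.2, p.1)) ?_ (swap_injOn _) (Set.toFinite _)
        rintro ⟨y, z⟩ ⟨⟨hadj, hy, hz⟩, hz2⟩
        exact ⟨⟨hadj.symm, fun h => hz ⟨h, hz2⟩, hy.2⟩, hz2⟩
      have a2 : (bord H (B ∩ B') \ {p | p.2 ∈ B'}).ncard ≤ (E₁ ∩ T).ncard := by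
        refine Set.ncard_le_ncard_of_injOn id ?_ (Function.injective_id.injOn) (Set.toFinite _)
        rintro ⟨y, z⟩ ⟨⟨hadj, hy, hz⟩, hz2⟩
        exact ⟨⟨hadj, hy.1, hz2⟩, hy.2⟩
      have a3 : (bord H (B ∪ B') ∩ T).ncard ≤ (E₂ \ T).ncard := by
        refine Set.ncard_le_ncard_of_injOn (fun p => (p.2, p.1)) ?_ (swap_injOn _) (Set.toFinite _)
        rintro ⟨y, z⟩ ⟨⟨hadj, hy, hz⟩, hy2⟩
        exact ⟨⟨hadj.symm, fun h => hz (Or.inl h), hy2⟩, fun h => hz (Or.inr h)⟩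
      have a4 : (bord H (B ∪ B') \ T).ncard ≤ (E₁ \ T).ncard := by
        refine Set.ncard_le_ncard_of_injOn id ?_ (Function.injective_id.injOn) (Set.toFinite _)
        rintro ⟨y, z⟩ ⟨⟨hadj, hy, hz⟩, hy2⟩
        have hyB : y ∈ B := by
          rcases hy with h | h
          · exact h
          · exact absurd h hy2
        exact ⟨⟨hadj, hyB, fun h => hz (Or.inr h)⟩, hy2⟩
      have e1 := hsplit E₁ T
      have e2 := hsplit E₂ T
      have s1 := hsplit (bord H (B ∩ B')) {p | p.2 ∈ B'}
      have s2 := hsplit (bord H (B ∪ B')) T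
      omega


end Aux2
section Aux3

lemma key_s4 {α β γ : Type*} [Fintype α] [Fintype β] [Fintype γ]
    (G : SimpleGraph α) (H : SimpleGraph β) (K : SimpleGraph γ) (emb : α × β ≃ γ)
    (hK1 : ∀ x y y', H.Adj y y' → K.Adj (emb (x, y)) (emb (x, y')))
    (hK2 : ∀ x x' y y', G.Adj x x' → (y = y' ∨ H.Adj y y') →
      K.Adj (emb (x, y)) (emb (x', y')))
    (S : Set (Sym2 γ)) (D₁ D₂ : (K.deleteEdges S).ConnectedComponent) (hne : D₁ ≠ D₂)
    (hx : ∀ x : α, (∃ y, emb (x, y) ∈ D₁.supp) ∧ (∃ y, emb (x, y) ∈ D₂.supp)) :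
    (Fintype.card α + 2 * numEdges G) * edgeConn H ≤ S.ncard := by
  classical
  -- crossing edges lie in S
  have cross : ∀ u v : γ, K.Adj u v → u ∈ D₁.supp → v ∉ D₁.supp → s(u, v) ∈ S := by
    intro u v hadj hu hv
    by_contra hS
    have hadj' : (K.deleteEdges S).Adj u v := by
      rw [SimpleGraph.deleteEdges_adj]
      exact ⟨hadj, hS⟩
    rw [SimpleGraph.ConnectedComponent.mem_supp_iff] at hu hv
    exact hv ((SimpleGraph.ConnectedComponent.sound hadj'.symm.reachable).trans hu)
  set A : α → Set β := fun x => {y | emb (x, y) ∈ D₁.supp} with hA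
  have hA1 : ∀ x, (A x).Nonempty := fun x => (hx x).1
  have hA2 : ∀ x, (A x)ᶜ.Nonempty := by
    intro x
    obtain ⟨y, hy⟩ := (hx x).2
    refine ⟨y, fun h => hne ?_⟩
    have h' : emb (x, y) ∈ D₁.supp := h
    rw [SimpleGraph.ConnectedComponent.mem_supp_iff] at h' hy
    exact h'.symm.trans hy
  set π : Sym2 γ → Sym2 α := Sym2.map (fun v => (emb.symm v).1) with hπ
  have hπcomp : ∀ (x x' : α) (y y' : β), π s(emb (x, y), emb (x', y')) = s(x, x') := by
    intro x x' y y'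
    rw [hπ, Sym2.map_pair_eq]
    simp
  -- layer fibers
  have fib1 : ∀ x : α, edgeConn H ≤ {e | e ∈ S ∧ π e = s(x, x)}.ncard := by
    intro x
    refine (edgeConn_le_bord H (A x) (hA1 x) (hA2 x)).trans ?_
    refine Set.ncard_le_ncard_of_injOn (fun p => s(emb (x, p.1), emb (x, p.2))) ?_ ?_
      (Set.toFinite _)
    · rintro ⟨y, z⟩ ⟨hadj, hy, hz⟩
      exact ⟨cross _ _ (hK1 x y z hadj) hy hz, hπcomp x x y z⟩
    · rintro ⟨y, z⟩ ⟨_, hy, hz⟩ ⟨y', z'⟩ ⟨_, hy', hz'⟩ heq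
      simp only [Sym2.eq_iff] at heq
      rcases heq with ⟨h1, h2⟩ | ⟨h1, h2⟩
      · have e1 := emb.injective h1
        have e2 := emb.injective h2
        simp only [Prod.mk.injEq] at e1 e2
        simp [e1.2, e2.2]
      · have e1 := emb.injective h1
        simp only [Prod.mk.injEq] at e1
        exact absurd (e1.2 ▸ hy) hz'
  -- edge fibers
  have fib2 : ∀ x x' : α, G.Adj x x' →
      2 * edgeConn H ≤ {e | e ∈ S ∧ π e = s(x, x')}.ncard := by
    intro x x' hxx'
    have hner : x ≠ x' := hxx'.ne
    refine (lemA H (A x) (A x') (hA1 x) (hA1 x') (hA2 x) (hA2 x')).trans ?_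
    have hdisj : Disjoint {p : β × β | (p.1 = p.2 ∨ H.Adj p.1 p.2) ∧ p.1 ∈ A x ∧ p.2 ∉ A x'}
        {p : β × β | (p.1 = p.2 ∨ H.Adj p.1 p.2) ∧ p.1 ∉ A x ∧ p.2 ∈ A x'} := by
      rw [Set.disjoint_left]
      rintro p ⟨_, hp, _⟩ ⟨_, hp', _⟩
      exact hp' hp
    rw [← Set.ncard_union_eq hdisj (Set.toFinite _) (Set.toFinite _)]
    refine Set.ncard_le_ncard_of_injOn (fun p => s(emb (x, p.1), emb (x', p.2))) ?_ ?_
      (Set.toFinite _)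
    · rintro ⟨y, z⟩ (⟨hrel, hy, hz⟩ | ⟨hrel, hy, hz⟩)
      · exact ⟨cross _ _ (hK2 x x' y z hxx' hrel) hy hz, hπcomp x x' y z⟩
      · refine ⟨?_, hπcomp x x' y z⟩
        have := cross _ _ (hK2 x x' y z hxx' hrel).symm hz hy
        rwa [Sym2.eq_swap] at this
    · rintro ⟨y, z⟩ _ ⟨y', z'⟩ _ heq
      simp only [Sym2.eq_iff] at heq
      rcases heq with ⟨h1, h2⟩ | ⟨h1, h2⟩
      · have e1 := emb.injective h1
        have e2 := emb.injective h2
        simp only [Prod.mk.injEq] at e1 e2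
        simp [e1.2, e2.2]
      · have e1 := emb.injective h1
        simp only [Prod.mk.injEq] at e1
        exact absurd e1.1 hner
  -- assemble
  set Sf := S.toFinset with hSf
  have hcardS : S.ncard = Sf.card := Set.ncard_eq_toFinset_card' S
  set fib : Sym2 α → Finset (Sym2 γ) := fun a => Sf.filter (fun e => π e = a) with hfibdef
  have hfib : ∀ a, {e | e ∈ S ∧ π e = a}.ncard = (fib a).card := by
    intro a
    rw [← Set.ncard_coe_finset (fib a)]
    congr 1
    ext e
    simp [hfibdef, hSf, Set.mem_toFinset]
  have main : ∀ T : Finset (Sym2 α), ∑ a ∈ T, (fib a).card ≤ Sf.card := by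
    intro T
    have h1 : (Sf.filter (fun e => π e ∈ T)).card
        = ∑ a ∈ T, ((Sf.filter (fun e => π e ∈ T)).filter (fun e => π e = a)).card :=
      Finset.card_eq_sum_card_fiberwise (fun e he => (Finset.mem_filter.mp he).2)
    have h2 : ∑ a ∈ T, ((Sf.filter (fun e => π e ∈ T)).filter (fun e => π e = a)).card
        = ∑ a ∈ T, (fib a).card := by
      refine Finset.sum_congr rfl fun a ha => ?_
      congr 1
      ext e
      simp only [Finset.mem_filter, hfibdef]
      constructor
      · rintro ⟨⟨he, _⟩, h⟩; exact ⟨he, h⟩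
      · rintro ⟨he, h⟩; exact ⟨⟨he, h ▸ ha⟩, h⟩
    calc ∑ a ∈ T, (fib a).card = (Sf.filter (fun e => π e ∈ T)).card := by rw [h1, h2]
      _ ≤ Sf.card := Finset.card_le_card (Finset.filter_subset _ _)
  set diagT : Finset (Sym2 α) := Finset.univ.image (fun x : α => s(x, x)) with hdiagT
  have hTdisj : Disjoint diagT G.edgeFinset := by
    rw [Finset.disjoint_left]
    rintro e he he'
    simp only [hdiagT, Finset.mem_image] at he
    obtain ⟨x, _, rfl⟩ := he
    rw [SimpleGraph.mem_edgeFinset, SimpleGraph.mem_edgeSet] at he'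
    exact he'.ne rfl
  have hdiag_sum : Fintype.card α * edgeConn H ≤ ∑ a ∈ diagT, (fib a).card := by
    rw [hdiagT, Finset.sum_image ?inj]
    case inj =>
      intro x _ y _ h
      simp only [Sym2.eq_iff] at h
      tauto
    calc Fintype.card α * edgeConn H = ∑ _x : α, edgeConn H := by
          rw [Finset.sum_const, smul_eq_mul, Finset.card_univ]
      _ ≤ ∑ x : α, (fib s(x, x)).card :=
          Finset.sum_le_sum fun x _ => (hfib s(x, x)) ▸ fib1 x
  have hedge_sum : numEdges G * (2 * edgeConn H) ≤ ∑ a ∈ G.edgeFinset, (fib a).card := by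
    have hnum : numEdges G = G.edgeFinset.card := Set.ncard_eq_toFinset_card' _
    calc numEdges G * (2 * edgeConn H) = ∑ _a ∈ G.edgeFinset, 2 * edgeConn H := by
          rw [Finset.sum_const, smul_eq_mul, hnum]
      _ ≤ ∑ a ∈ G.edgeFinset, (fib a).card := by
          refine Finset.sum_le_sum fun e he => ?_
          induction e with
          | h x x' =>
            rw [SimpleGraph.mem_edgeFinset, SimpleGraph.mem_edgeSet] at he
            exact (hfib s(x, x')) ▸ fib2 x x' he
  have htot := main (diagT ∪ G.edgeFinset)
  rw [Finset.sum_union hTdisj] at htot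
  have : (Fintype.card α + 2 * numEdges G) * edgeConn H
      = Fintype.card α * edgeConn H + numEdges G * (2 * edgeConn H) := by ring
  omega

end Aux3
/-- Let S be a minimum 3-restricted edge-cut of G ⊠ H with the two
components D₁, D₂. If every H-layer meets both D₁ and D₂ then
|S| ≥ (m + 2e(G))λ(H); if every G-layer meets both D₁ and D₂ then
|S| ≥ (n + 2e(H))λ(G). -/
theorem stmt4 {α β : Type*} [Fintype α] [Fintype β]
    (G : SimpleGraph α) (H : SimpleGraph β)
    (hG : G.Connected) (hH : H.Connected)
    (hm : 3 ≤ Fintype.card α) (hn : 3 ≤ Fintype.card β)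
    (S : Set (Sym2 (α × β)))
    (hS : IsKRestrictedEdgeCut (strongProd G H) 3 S)
    (hmin : (S.ncard : ℕ∞) = lamK (strongProd G H) 3)
    (D₁ D₂ : ((strongProd G H).deleteEdges S).ConnectedComponent)
    (hne : D₁ ≠ D₂) (hall : ∀ c, c = D₁ ∨ c = D₂) :
    ((∀ x : α, (∃ y, (x, y) ∈ D₁.supp) ∧ (∃ y, (x, y) ∈ D₂.supp)) →
      (Fintype.card α + 2 * numEdges G) * edgeConn H ≤ S.ncard) ∧
    ((∀ y : β, (∃ x, (x, y) ∈ D₁.supp) ∧ (∃ x, (x, y) ∈ D₂.supp)) →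
      (Fintype.card β + 2 * numEdges H) * edgeConn G ≤ S.ncard) := by

  constructor
  · intro h
    refine key_s4 G H (strongProd G H) (Equiv.refl _) ?_ ?_ S D₁ D₂ hne h
    · intro x y y' h'
      exact Or.inl ⟨rfl, h'⟩
    · intro x x' y y' hg hr
      rcases hr with h'' | h''
      · exact Or.inr (Or.inl ⟨h'', hg⟩)
      · exact Or.inr (Or.inr ⟨hg, h''⟩)
  · intro h
    refine key_s4 H G (strongProd G H) (Equiv.prodComm β α) ?_ ?_ S D₁ D₂ hne h
    · intro y x x' h'
      exact Or.inr (Or.inl ⟨rfl, h'⟩)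
    · intro y y' x x' hh hr
      rcases hr with h'' | h''
      · exact Or.inl ⟨h'', hh⟩
      · exact Or.inr (Or.inr ⟨h'', hh⟩)
end

section
/- Let G be a connected simple graph of order at least 6. If G has a 3-restricted edge-cut, then λ₃(G) ≤ ξ₃(G). -/
open SimpleGraph

variable {V : Type*}

namespace Scratch

variable {V : Type*} {G : SimpleGraph V}

/-- Connected within a vertex set, via a walk whose support stays in S. -/
def LinkedIn (G : SimpleGraph V) (S : Set V) (u v : V) : Prop :=
  ∃ p : G.Walk u v, ∀ x ∈ p.support, x ∈ S

def ConnIn (G : SimpleGraph V) (S : Set V) : Prop :=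
  S.Nonempty ∧ ∀ u ∈ S, ∀ v ∈ S, LinkedIn G S u v

lemma LinkedIn.refl {S : Set V} {u : V} (hu : u ∈ S) : LinkedIn G S u u :=
  ⟨Walk.nil, by simp [hu]⟩

lemma LinkedIn.symm {S : Set V} {u v : V} (h : LinkedIn G S u v) : LinkedIn G S v u := by
  obtain ⟨p, hp⟩ := h
  exact ⟨p.reverse, by intro x hx; rw [Walk.support_reverse] at hx; exact hp x (List.mem_reverse.1 hx)⟩

lemma LinkedIn.trans {S : Set V} {u v w : V} (h : LinkedIn G S u v) (h' : LinkedIn G S v w) :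
    LinkedIn G S u w := by
  obtain ⟨p, hp⟩ := h
  obtain ⟨q, hq⟩ := h'
  refine ⟨p.append q, ?_⟩
  intro x hx
  rw [Walk.support_append] at hx
  rcases List.mem_append.1 hx with hx | hx
  · exact hp x hx
  · exact hq x (List.mem_of_mem_tail hx)

lemma LinkedIn.mono {S S' : Set V} {u v : V} (h : LinkedIn G S u v) (hss : S ⊆ S') :
    LinkedIn G S' u v := by
  obtain ⟨p, hp⟩ := h
  exact ⟨p, fun x hx => hss (hp x hx)⟩

lemma LinkedIn.of_adj {S : Set V} {u v : V} (h : G.Adj u v) (hu : u ∈ S) (hv : v ∈ S) :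
    LinkedIn G S u v :=
  ⟨Walk.cons h Walk.nil, by intro x hx; simp at hx; rcases hx with rfl | rfl <;> assumption⟩

lemma LinkedIn.mem_left {S : Set V} {u v : V} (h : LinkedIn G S u v) : u ∈ S := by
  obtain ⟨p, hp⟩ := h; exact hp u p.start_mem_support

lemma LinkedIn.mem_right {S : Set V} {u v : V} (h : LinkedIn G S u v) : v ∈ S := by
  obtain ⟨p, hp⟩ := h; exact hp v p.end_mem_support

lemma LinkedIn.reachable {S : Set V} {u v : V} (h : LinkedIn G S u v) : G.Reachable u v := by
  obtain ⟨p, _⟩ := h; exact ⟨p⟩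

/-- Exit lemma: a walk inside S from inside T to outside T crosses an edge from T to S \\ T. -/
lemma exists_exit {S T : Set V} {u v : V} (h : LinkedIn G S u v) (hu : u ∈ T) (hv : v ∉ T) :
    ∃ a b, a ∈ T ∧ a ∈ S ∧ b ∈ S ∧ b ∉ T ∧ G.Adj a b := by
  obtain ⟨p, hp⟩ := h
  revert hp hu hv
  induction p with
  | nil => intro hu hv hp; exact absurd hu hv
  | @cons a b c hadj q ih =>
    intro hu hv hp
    have hq : ∀ x ∈ q.support, x ∈ S := fun x hx =>
      hp x (by rw [Walk.support_cons]; exact List.mem_cons_of_mem _ hx)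
    by_cases hb : b ∈ T
    · exact ih hb hv hq
    · exact ⟨a, b, hu, hp a ((Walk.cons hadj q).start_mem_support),
        hq b q.start_mem_support, hb, hadj⟩

lemma mem_eb {W : Set V} {e : Sym2 V} :
    e ∈ edgeBoundary G W ↔ ∃ u v, G.Adj u v ∧ u ∈ W ∧ v ∉ W ∧ e = s(u, v) := by
  constructor
  · rintro ⟨he, u, v, rfl, hu, hv⟩
    exact ⟨u, v, (G.mem_edgeSet).1 he, hu, hv, rfl⟩
  · rintro ⟨u, v, h, hu, hv, rfl⟩
    exact ⟨(G.mem_edgeSet).2 h, u, v, rfl, hu, hv⟩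

lemma not_mem_eb_of_both {W : Set V} {a b : V} (ha : (a ∈ W ∧ b ∈ W) ∨ (a ∉ W ∧ b ∉ W)) :
    s(a, b) ∉ edgeBoundary G W := by
  intro h
  rw [mem_eb] at h
  obtain ⟨u, v, _, hu, hv, he⟩ := h
  rcases Sym2.eq_iff.1 he with ⟨rfl, rfl⟩ | ⟨rfl, rfl⟩ <;> rcases ha with ⟨h1, h2⟩ | ⟨h1, h2⟩ <;>
    first | exact hv h2 | exact hv h1 | exact h2 hu | exact h1 hu

/-- Reachability in G minus ∂W preserves the side of W. -/
lemma side_of_reach {W : Set V} {u v : V}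
    (h : (G.deleteEdges (edgeBoundary G W)).Reachable u v) (hu : u ∈ W) : v ∈ W := by
  obtain ⟨p⟩ := h
  revert hu
  induction p with
  | nil => exact id
  | @cons a b c hadj q ih =>
    intro ha
    refine ih ?_
    rw [deleteEdges_adj] at hadj
    by_contra hb
    exact hadj.2 (mem_eb.2 ⟨a, b, hadj.1, ha, hb, rfl⟩)

lemma side_of_reach' {W : Set V} {u v : V}
    (h : (G.deleteEdges (edgeBoundary G W)).Reachable u v) (hu : u ∉ W) : v ∉ W := by
  intro hv
  exact hu (side_of_reach h.symm hv)

/-- A walk staying inside W survives deleting ∂W. -/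
lemma reach_del_of_linkedIn {W : Set V} {u v : V} (h : LinkedIn G W u v) :
    (G.deleteEdges (edgeBoundary G W)).Reachable u v := by
  obtain ⟨p, hp⟩ := h
  revert hp
  induction p with
  | nil => intro _; exact Reachable.refl _
  | @cons a b c hadj q ih =>
    intro hp
    have hq : ∀ x ∈ q.support, x ∈ W := fun x hx =>
      hp x (by rw [Walk.support_cons]; exact List.mem_cons_of_mem _ hx)
    have hadj' : (G.deleteEdges (edgeBoundary G W)).Adj a b := by
      rw [deleteEdges_adj]
      exact ⟨hadj, not_mem_eb_of_both (Or.inl ⟨hp a ((Walk.cons hadj q).start_mem_support),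
        hq b q.start_mem_support⟩)⟩
    exact hadj'.reachable.trans (ih hq)

/-- A walk staying outside W survives deleting ∂W. -/
lemma reach_del_of_linkedIn_compl {W : Set V} {u v : V} (h : LinkedIn G Wᶜ u v) :
    (G.deleteEdges (edgeBoundary G W)).Reachable u v := by
  obtain ⟨p, hp⟩ := h
  revert hp
  induction p with
  | nil => intro _; exact Reachable.refl _
  | @cons a b c hadj q ih =>
    intro hp
    have hq : ∀ x ∈ q.support, x ∈ Wᶜ := fun x hx =>
      hp x (by rw [Walk.support_cons]; exact List.mem_cons_of_mem _ hx)
    have hadj' : (G.deleteEdges (edgeBoundary G W)).Adj a b := by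
      rw [deleteEdges_adj]
      exact ⟨hadj, not_mem_eb_of_both (Or.inr ⟨hp a ((Walk.cons hadj q).start_mem_support),
        hq b q.start_mem_support⟩)⟩
    exact hadj'.reachable.trans (ih hq)

/-- Reachability after deleting edges gives a G-walk within the component support. -/
lemma linkedIn_supp_of_reach {s : Set (Sym2 V)} {a b : V}
    (h : (G.deleteEdges s).Reachable a b) :
    LinkedIn G ((G.deleteEdges s).connectedComponentMk a).supp a b := by
  obtain ⟨p⟩ := h
  induction p with
  | nil => exact LinkedIn.refl (by rw [ConnectedComponent.mem_supp_iff])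
  | @cons a c d hadj q ih =>
    have hcc : (G.deleteEdges s).connectedComponentMk c
        = (G.deleteEdges s).connectedComponentMk a :=
      ConnectedComponent.eq.2 hadj.reachable.symm
    rw [hcc] at ih
    refine (LinkedIn.of_adj ((deleteEdges_adj.1 hadj).1) ?_ ?_).trans ih
    · rw [ConnectedComponent.mem_supp_iff]
    · rw [ConnectedComponent.mem_supp_iff]; exact hcc

lemma connIn_supp {s : Set (Sym2 V)} (c : (G.deleteEdges s).ConnectedComponent) :
    ConnIn G c.supp := by
  induction c using ConnectedComponent.ind with
  | _ w =>
    refine ⟨⟨w, by rw [ConnectedComponent.mem_supp_iff]⟩, ?_⟩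
    intro u hu v hv
    rw [ConnectedComponent.mem_supp_iff] at hu hv
    have hr : (G.deleteEdges s).Reachable u v := ConnectedComponent.eq.1 (hu.trans hv.symm)
    have := linkedIn_supp_of_reach hr
    rwa [hu] at this

/-- Transfer a walk in G−s avoiding W to G−∂W. -/
lemma reach_transfer {s : Set (Sym2 V)} {W : Set V}
    (hstep : ∀ a b, (G.deleteEdges s).Adj a b → a ∉ W → b ∉ W) {v u : V}
    (h : (G.deleteEdges s).Reachable v u) (hv : v ∉ W) :
    (G.deleteEdges (edgeBoundary G W)).Reachable v u := by
  obtain ⟨p⟩ := h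
  revert hv
  induction p with
  | nil => intro _; exact Reachable.refl _
  | @cons a b c hadj q ih =>
    intro ha
    have hb : b ∉ W := hstep a b hadj ha
    have hadj' : (G.deleteEdges (edgeBoundary G W)).Adj a b := by
      rw [deleteEdges_adj]
      exact ⟨(deleteEdges_adj.1 hadj).1, not_mem_eb_of_both (Or.inr ⟨ha, hb⟩)⟩
    exact hadj'.reachable.trans (ih hb)

/-- The core cut lemma. -/
lemma cut_lemma [Finite V] {W : Set V} (hW : ConnIn G W) (h3 : 3 ≤ W.ncard)
    (hco : Wᶜ.Nonempty)
    (hcomp : ∀ v, v ∉ W →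
      3 ≤ ((G.deleteEdges (edgeBoundary G W)).connectedComponentMk v).supp.ncard) :
    IsKRestrictedEdgeCut G 3 (edgeBoundary G W) := by
  refine ⟨fun e he => he.1, ?_, ?_⟩
  · intro hc
    obtain ⟨w, hw⟩ := hW.1
    obtain ⟨u, hu⟩ := hco
    exact hu (side_of_reach (hc.preconnected w u) hw)
  · intro c
    induction c using ConnectedComponent.ind with
    | _ v =>
      by_cases hv : v ∈ W
      · have hsub : W ⊆ ((G.deleteEdges (edgeBoundary G W)).connectedComponentMk v).supp := by
          intro x hx
          rw [ConnectedComponent.mem_supp_iff, ConnectedComponent.eq]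
          exact reach_del_of_linkedIn (hW.2 x hx v hv)
        exact le_trans h3 (Set.ncard_le_ncard hsub (Set.toFinite _))
      · exact hcomp v hv

lemma linkedIn_of_induce_reach {X : Set V} {a b : ↥X} (h : (G.induce X).Reachable a b) :
    LinkedIn G X ↑a ↑b := by
  obtain ⟨p⟩ := h
  induction p with
  | nil => exact LinkedIn.refl (Subtype.coe_prop _)
  | @cons a w c hadj q ih =>
    exact (LinkedIn.of_adj (comap_adj.1 hadj) a.2 w.2).trans ih

lemma connIn_of_induce {X : Set V} (h : (G.induce X).Connected) (hne : X.Nonempty) :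
    ConnIn G X := by
  refine ⟨hne, fun u hu v hv => ?_⟩
  exact linkedIn_of_induce_reach (h.preconnected ⟨u, hu⟩ ⟨v, hv⟩)

/-- Every connected graph on ≥ 3 vertices has a vertex with two distinct neighbors. -/
lemma exists_cherry [Fintype V] (hconn : G.Connected) (h3 : 3 ≤ Fintype.card V) :
    ∃ v x y, x ≠ y ∧ G.Adj v x ∧ G.Adj v y := by
  by_contra hno
  push_neg at hno
  have hdeg : ∀ v x y, G.Adj v x → G.Adj v y → x = y := by
    intro v x y h1 h2
    by_contra hxy
    exact (hno v x y hxy h1) h2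
  -- get an edge
  have h2 : 1 < Fintype.card V := by omega
  obtain ⟨a, b, hab⟩ := Fintype.exists_pair_of_one_lt_card h2
  obtain ⟨p⟩ := hconn.preconnected a b
  have hedge : ∃ x y, G.Adj x y := by
    cases p with
    | nil => exact absurd rfl hab
    | cons h q => exact ⟨_, _, h⟩
  obtain ⟨x, y, hxy⟩ := hedge
  have hcu : ∃ c, c ≠ x ∧ c ≠ y := by
    by_contra hc
    push_neg at hc
    have : (Set.univ : Set V) ⊆ {x, y} := by
      intro z _
      by_cases hz : z = x
      · exact Or.inl hz
      · exact Or.inr (hc z hz)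
    have h1 : (Set.univ : Set V).ncard ≤ ({x, y} : Set V).ncard :=
      Set.ncard_le_ncard this (Set.toFinite _)
    rw [Set.ncard_univ, Nat.card_eq_fintype_card] at h1
    have h2 : ({x, y} : Set V).ncard ≤ 2 := by
      refine le_trans (Set.ncard_insert_le _ _) ?_
      simp [Set.ncard_singleton]
    omega
  obtain ⟨c, hcx, hcy⟩ := hcu
  -- every walk to x starts at x or y
  have key : ∀ (u w : V) (p : G.Walk u w), w = x → u = x ∨ u = y := by
    intro u w p
    induction p with
    | nil => intro h; exact Or.inl h
    | @cons u m w hadj q ih =>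
      intro hw
      rcases ih hw with h | h
      · exact Or.inr (hdeg x y u hxy (h ▸ hadj).symm).symm
      · exact Or.inl (hdeg y x u hxy.symm (h ▸ hadj).symm).symm
  obtain ⟨p⟩ := hconn.preconnected c x
  rcases key c x p rfl with rfl | rfl
  · exact hcx rfl
  · exact hcy rfl

lemma exists_triple [Fintype V] (hconn : G.Connected) (h3 : 3 ≤ Fintype.card V) :
    ∃ X : Set V, X.ncard = 3 ∧ (G.induce X).Connected := by
  obtain ⟨v, x, y, hxy, hvx, hvy⟩ := exists_cherry hconn h3
  refine ⟨{x, v, y}, ?_, ?_⟩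
  · rw [Set.ncard_eq_three]
    exact ⟨x, v, y, hvx.ne', hxy, hvy.ne, rfl⟩
  · have hv : v ∈ ({x, v, y} : Set V) := by simp
    rw [connected_iff]
    refine ⟨?_, ⟨⟨v, hv⟩⟩⟩
    have hreach : ∀ p : ↥({x, v, y} : Set V), (G.induce {x, v, y}).Reachable p ⟨v, hv⟩ := by
      rintro ⟨p, hp⟩
      have hx : x ∈ ({x, v, y} : Set V) := by simp
      have hy : y ∈ ({x, v, y} : Set V) := by simp
      simp only [Set.mem_insert_iff, Set.mem_singleton_iff] at hp
      rcases hp with rfl | rfl | rfl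
      · exact (Adj.reachable (by exact hvx.symm : (G.induce {p, v, y}).Adj ⟨p, by simp⟩ ⟨v, hv⟩))
      · exact Reachable.refl _
      · exact (Adj.reachable (by exact hvy.symm : (G.induce {x, v, p}).Adj ⟨p, by simp⟩ ⟨v, hv⟩))
    intro p q
    exact (hreach p).trans (hreach q).symm

/-- Cross edges between two vertex sets. -/
def cross (G : SimpleGraph V) (S T : Set V) : Set (Sym2 V) :=
  {e | ∃ u v, G.Adj u v ∧ u ∈ S ∧ v ∈ T ∧ e = s(u, v)}

lemma cross_comm (S T : Set V) : cross G S T = cross G T S := by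
  ext e
  constructor <;> rintro ⟨u, v, h, hu, hv, rfl⟩ <;>
    exact ⟨v, u, h.symm, hv, hu, Sym2.eq_swap⟩

lemma cross_mono {S T S' T' : Set V} (hS : S ⊆ S') (hT : T ⊆ T') :
    cross G S T ⊆ cross G S' T' := by
  rintro e ⟨u, v, h, hu, hv, rfl⟩
  exact ⟨u, v, h, hS hu, hT hv, rfl⟩

lemma eb_eq_cross (W : Set V) : edgeBoundary G W = cross G W Wᶜ := by
  ext e
  rw [mem_eb]
  constructor
  · rintro ⟨u, v, h, hu, hv, rfl⟩; exact ⟨u, v, h, hu, hv, rfl⟩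
  · rintro ⟨u, v, h, hu, hv, rfl⟩; exact ⟨u, v, h, hu, hv, rfl⟩

lemma cross_disj_left {S T S' T' : Set V} (h : Disjoint (S ∪ T) S') :
    Disjoint (cross G S T) (cross G S' T') := by
  rw [Set.disjoint_left]
  rintro e ⟨u, v, hadj, hu, hv, rfl⟩ ⟨u', v', hadj', hu', hv', he⟩
  rcases Sym2.eq_iff.1 he with ⟨rfl, rfl⟩ | ⟨rfl, rfl⟩
  · exact Set.disjoint_left.1 h (Set.mem_union_left _ hu) hu'
  · exact Set.disjoint_left.1 h (Set.mem_union_right _ hv) hu'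

lemma cross_disj_right {S T S' T' : Set V} (h : Disjoint (S ∪ T) T') :
    Disjoint (cross G S T) (cross G S' T') := by
  rw [Set.disjoint_left]
  rintro e ⟨u, v, hadj, hu, hv, rfl⟩ ⟨u', v', hadj', hu', hv', he⟩
  rcases Sym2.eq_iff.1 he with ⟨rfl, rfl⟩ | ⟨rfl, rfl⟩
  · exact Set.disjoint_left.1 h (Set.mem_union_right _ hv) hv'
  · exact Set.disjoint_left.1 h (Set.mem_union_left _ hu) hv'

section Case2
variable [Finite V]

lemma case2_count {X A B : Set V} {x y z : V}
    (hAB : B = Aᶜ)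
    (hXA : A ∩ X = {x}) (hXB : B ∩ X = {y, z}) (hyz : y ≠ z)
    (hA : ConnIn G A) (hB : ConnIn G B) (hA3 : 3 ≤ A.ncard) (hB3 : 3 ≤ B.ncard)
    (ymax : ∀ u v w, u ∉ X → v ∉ X → w ∉ X → G.Adj u v → G.Adj u w → v = w) :
    (edgeBoundary G A).ncard ≤ (edgeBoundary G X).ncard := by
  classical
  set XA : Set V := A ∩ X with hXAdef
  set XB : Set V := B ∩ X with hXBdef
  set YA : Set V := A \ X with hYAdef
  set YB : Set V := B \ X with hYBdef
  have hxXA : x ∈ XA := by rw [hXA]; rfl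
  have hxA : x ∈ A := hxXA.1
  have hxX : x ∈ X := hxXA.2
  have hyXB : y ∈ XB := by rw [hXB]; exact Set.mem_insert _ _
  have hyB : y ∈ B := hyXB.1
  have hdisjAB : Disjoint A B := by rw [hAB]; exact disjoint_compl_right
  have dXAXB : Disjoint XA XB := hdisjAB.mono Set.inter_subset_left Set.inter_subset_left
  have dXAYB : Disjoint XA YB := hdisjAB.mono Set.inter_subset_left Set.diff_subset
  have dYAXB : Disjoint YA XB := hdisjAB.mono Set.diff_subset Set.inter_subset_left
  have dYAYB : Disjoint YA YB := hdisjAB.mono Set.diff_subset Set.diff_subset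
  have dXAYA : Disjoint XA YA := by
    rw [Set.disjoint_left]; exact fun a ha hb => hb.2 ha.2
  have dXBYB : Disjoint XB YB := by
    rw [Set.disjoint_left]; exact fun a ha hb => hb.2 ha.2
  set P1 : Set (Sym2 V) := cross G XA YB with hP1
  set P2 : Set (Sym2 V) := cross G XB YA with hP2
  set R1 : Set (Sym2 V) := cross G XA XB with hR1
  set C : Set (Sym2 V) := cross G YA YB with hC
  set Q1 : Set (Sym2 V) := cross G XA YA with hQ1
  set Q2 : Set (Sym2 V) := cross G XB YB with hQ2
  have hXAcard : XA.ncard = 1 := by rw [hXA]; exact Set.ncard_singleton x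
  have hXBcard : XB.ncard = 2 := by rw [hXB]; exact Set.ncard_pair hyz
  have hsplitA : XA.ncard + YA.ncard = A.ncard := by
    rw [← Set.ncard_union_eq dXAYA (Set.toFinite _) (Set.toFinite _), hXAdef, hYAdef,
      Set.inter_union_diff]
  have hsplitB : XB.ncard + YB.ncard = B.ncard := by
    rw [← Set.ncard_union_eq dXBYB (Set.toFinite _) (Set.toFinite _), hXBdef, hYBdef,
      Set.inter_union_diff]
  have hYA2 : 2 ≤ YA.ncard := by omega
  have hYB1 : 1 ≤ YB.ncard := by omega
  have hAX : ∀ u ∈ A, u ∈ X → u = x := by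
    intro u hu hx
    have : u ∈ XA := ⟨hu, hx⟩
    rw [hXA] at this
    exact this
  -- every YA vertex with a YB neighbor is adjacent to x
  have adjx : ∀ u ∈ YA, (∃ v ∈ YB, G.Adj u v) → G.Adj x u := by
    rintro u hu ⟨v, hv, huv⟩
    have hlink : LinkedIn G A u x := hA.2 u hu.1 x hxA
    have hux : x ∉ ({u} : Set V) := by
      intro h
      rw [Set.mem_singleton_iff] at h
      exact hu.2 (h ▸ hxX)
    obtain ⟨a, b, haT, haA, hbA, hbT, hab⟩ := exists_exit (T := {u}) hlink (Set.mem_singleton _) hux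
    rw [Set.mem_singleton_iff] at haT
    by_cases hbX : b ∈ X
    · have hbx := hAX b hbA hbX
      rw [haT, hbx] at hab
      exact hab.symm
    · exfalso
      have hbYA : b ∈ YA := ⟨hbA, hbX⟩
      rw [haT] at hab
      have hvb := ymax u v b hu.2 hv.2 hbX huv hab
      exact dYAYB.ne_of_mem hbYA hv hvb.symm
  -- every YB vertex with a YA neighbor has an XB neighbor
  have adjB : ∀ v ∈ YB, (∃ u ∈ YA, G.Adj v u) → ∃ w ∈ XB, G.Adj v w := by
    rintro v hv ⟨u, hu, hvu⟩
    have hlink : LinkedIn G B v y := hB.2 v hv.1 y hyB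
    have hvy : y ∉ ({v} : Set V) := by
      intro h
      rw [Set.mem_singleton_iff] at h
      exact hv.2 (h ▸ hyXB.2)
    obtain ⟨a, b, haT, haB, hbB, hbT, hab⟩ := exists_exit (T := {v}) hlink (Set.mem_singleton _) hvy
    rw [Set.mem_singleton_iff] at haT
    rw [haT] at hab
    by_cases hbX : b ∈ X
    · exact ⟨b, ⟨hbB, hbX⟩, hab⟩
    · exfalso
      have hub := ymax v u b hv.2 hu.2 hbX hvu hab
      exact dYAYB.ne_of_mem hu ⟨hbB, hbX⟩ hub

  -- K3 : 1 ≤ Q1.ncard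
  have hK3 : 1 ≤ Q1.ncard := by
    have h1 : 1 < YA.ncard := by omega
    obtain ⟨u, hu, -⟩ := Set.exists_ne_of_one_lt_ncard h1 x
    have hlink : LinkedIn G A x u := hA.2 x hxA u hu.1
    have huT : u ∉ ({x} : Set V) := by
      intro h
      rw [Set.mem_singleton_iff] at h
      exact hu.2 (h ▸ hxX)
    obtain ⟨a, b, haT, haA, hbA, hbT, hab⟩ := exists_exit (T := {x}) hlink (Set.mem_singleton _) huT
    rw [Set.mem_singleton_iff] at haT
    rw [haT] at hab
    have hbYA : b ∈ YA := by
      refine ⟨hbA, fun hbX => ?_⟩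
      exact hbT (by rw [Set.mem_singleton_iff]; exact hAX b hbA hbX)
    have : s(x, b) ∈ Q1 := ⟨x, b, hab, hxXA, hbYA, rfl⟩
    have hpos : 0 < Q1.ncard := (Set.ncard_pos (Set.toFinite _)).2 ⟨_, this⟩
    omega
  -- K4 : 1 ≤ Q2.ncard
  have hK4 : 1 ≤ Q2.ncard := by
    have h1 : 0 < YB.ncard := by omega
    obtain ⟨v, hv⟩ := (Set.ncard_pos (Set.toFinite _)).1 h1
    have hlink : LinkedIn G B y v := hB.2 y hyB v hv.1
    have hvT : v ∉ XB := fun h => hv.2 h.2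
    obtain ⟨a, b, haT, haB, hbB, hbT, hab⟩ := exists_exit hlink hyXB hvT
    have hbYB : b ∈ YB := ⟨hbB, fun hbX => hbT ⟨hbB, hbX⟩⟩
    have : s(a, b) ∈ Q2 := ⟨a, b, hab, haT, hbYB, rfl⟩
    have hpos : 0 < Q2.ncard := (Set.ncard_pos (Set.toFinite _)).2 ⟨_, this⟩
    omega
  -- K5' : if C is nonempty then 2 ≤ Q1.ncard
  have hK5 : C.Nonempty → 2 ≤ Q1.ncard := by
    rintro ⟨e, u₀, v₀, h0, hu0, hv0, rfl⟩
    have hadj0 : G.Adj x u₀ := adjx u₀ hu0 ⟨v₀, hv0, h0⟩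
    have he0 : s(x, u₀) ∈ Q1 := ⟨x, u₀, hadj0, hxXA, hu0, rfl⟩
    obtain ⟨u₁, hu1, hu1ne⟩ := Set.exists_ne_of_one_lt_ncard (by omega : 1 < YA.ncard) u₀
    have huimage : ∃ a ∈ YA, a ≠ u₀ ∧ G.Adj x a := by
      by_cases hadj1 : G.Adj x u₁
      · exact ⟨u₁, hu1, hu1ne, hadj1⟩
      · -- u₁ has a YA neighbor u₂
        have hlink : LinkedIn G A u₁ x := hA.2 u₁ hu1.1 x hxA
        have hux : x ∉ ({u₁} : Set V) := by
          intro h; rw [Set.mem_singleton_iff] at h; exact hu1.2 (h ▸ hxX)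
        obtain ⟨a, u₂, haT, haA, hu2A, hu2T, hab⟩ := exists_exit (T := {u₁}) hlink (Set.mem_singleton _) hux
        rw [Set.mem_singleton_iff] at haT
        rw [haT] at hab
        have hu2YA : u₂ ∈ YA := by
          refine ⟨hu2A, fun hbX => ?_⟩
          have := hAX u₂ hu2A hbX
          rw [this] at hab
          exact hadj1 hab.symm
        have hu2ne1 : u₂ ≠ u₁ := fun h => hu2T (by rw [Set.mem_singleton_iff]; exact h)
        have hu2ne0 : u₂ ≠ u₀ := by
          rintro rfl
          have := ymax u₂ v₀ u₁ hu2YA.2 hv0.2 hu1.2 h0 hab.symm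
          exact dYAYB.ne_of_mem hu1 hv0 this.symm
        -- exit from {u₁, u₂}
        have hlink2 : LinkedIn G A u₁ x := hA.2 u₁ hu1.1 x hxA
        have hxT : x ∉ ({u₁, u₂} : Set V) := by
          intro h
          rcases h with h | h
          · exact hu1.2 (h ▸ hxX)
          · exact hu2YA.2 (h ▸ hxX)
        obtain ⟨c, d, hcT, hcA, hdA, hdT, hcd⟩ :=
          exists_exit hlink2 (Set.mem_insert _ _) hxT
        have hcYA : c ∈ YA := by
          rcases hcT with h | h
          · rw [h]; exact hu1
          · rw [Set.mem_singleton_iff] at h; rw [h]; exact hu2YA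
        have hcne0 : c ≠ u₀ := by
          rcases hcT with h | h
          · rw [h]; exact hu1ne
          · rw [Set.mem_singleton_iff] at h; rw [h]; exact hu2ne0
        by_cases hdX : d ∈ X
        · have := hAX d hdA hdX
          rw [this] at hcd
          exact ⟨c, hcYA, hcne0, hcd.symm⟩
        · exfalso
          have hdYA : d ∈ YA := ⟨hdA, hdX⟩
          rcases hcT with h | h
          · -- c = u₁ : neighbors u₂ and d
            rw [h] at hcd
            have := ymax u₁ u₂ d hu1.2 hu2YA.2 hdX hab hcd
            exact hdT (by rw [← this]; exact Set.mem_insert_of_mem _ rfl)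
          · rw [Set.mem_singleton_iff] at h
            rw [h] at hcd
            have := ymax u₂ u₁ d hu2YA.2 hu1.2 hdX hab.symm hcd
            exact hdT (by rw [← this]; exact Set.mem_insert _ _)
    obtain ⟨a, haYA, hane, hadja⟩ := huimage
    have hea : s(x, a) ∈ Q1 := ⟨x, a, hadja, hxXA, haYA, rfl⟩
    have hne : s(x, u₀) ≠ s(x, a) := by
      intro h
      rcases Sym2.eq_iff.1 h with ⟨-, h2⟩ | ⟨h1, -⟩
      · exact hane h2.symm
      · exact haYA.2 (h1 ▸ hxX)
    have := (Set.one_lt_ncard (Set.toFinite Q1)).2 ⟨_, he0, _, hea, hne⟩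
    omega
  -- K2 : C.ncard ≤ Q2.ncard
  have hK2 : C.ncard ≤ Q2.ncard := by
    have hCC : C.ncard = (cross G YB YA).ncard := by rw [hC, cross_comm]
    rw [hCC]
    set f : Sym2 V → Sym2 V := fun e =>
      if h : e ∈ cross G YB YA then
        (if h2 : ∃ w ∈ XB, G.Adj h.choose w then s(h.choose, h2.choose) else e)
      else e with hf
    have hchoose : ∀ e (h : e ∈ cross G YB YA),
        h.choose ∈ YB ∧ ∃ u ∈ YA, G.Adj h.choose u ∧ e = s(h.choose, u) := by
      intro e h
      obtain ⟨w, hadj, hv, hw, he⟩ := h.choose_spec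
      exact ⟨hv, w, hw, hadj, he⟩
    have hmem : ∀ e ∈ cross G YB YA, f e ∈ Q2 := by
      intro e he
      obtain ⟨hv, u, hu, hadj, heq⟩ := hchoose e he
      have h2 : ∃ w ∈ XB, G.Adj he.choose w := adjB he.choose hv ⟨u, hu, hadj⟩
      rw [hf]
      simp only [dif_pos he, dif_pos h2]
      obtain ⟨hw2, hadj2⟩ := h2.choose_spec
      exact ⟨h2.choose, he.choose, hadj2.symm, hw2, hv, Sym2.eq_swap⟩
    have hinj : Set.InjOn f (cross G YB YA) := by
      intro e₁ he₁ e₂ he₂ hfe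
      obtain ⟨hv₁, u₁, hu₁, hadj₁, heq₁⟩ := hchoose e₁ he₁
      obtain ⟨hv₂, u₂, hu₂, hadj₂, heq₂⟩ := hchoose e₂ he₂
      have h2₁ : ∃ w ∈ XB, G.Adj he₁.choose w := adjB he₁.choose hv₁ ⟨u₁, hu₁, hadj₁⟩
      have h2₂ : ∃ w ∈ XB, G.Adj he₂.choose w := adjB he₂.choose hv₂ ⟨u₂, hu₂, hadj₂⟩
      rw [hf] at hfe
      simp only [dif_pos he₁, dif_pos he₂, dif_pos h2₁, dif_pos h2₂] at hfe
      obtain ⟨hw₁, -⟩ := h2₁.choose_spec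
      obtain ⟨hw₂, -⟩ := h2₂.choose_spec
      have hvv : he₁.choose = he₂.choose := by
        rcases Sym2.eq_iff.1 hfe with ⟨h1, -⟩ | ⟨h1, -⟩
        · exact h1
        · exact absurd h1 (dXBYB.symm.ne_of_mem hv₁ hw₂)
      have huu : u₁ = u₂ := by
        refine ymax he₁.choose u₁ u₂ hv₁.2 hu₁.2 hu₂.2 hadj₁ ?_
        rw [hvv]
        exact hadj₂
      rw [heq₁, heq₂, hvv, huu]
    exact Set.ncard_le_ncard_of_injOn f hmem hinj (Set.toFinite _)
  -- K6 : R1.ncard ≤ 2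
  have hK6 : R1.ncard ≤ 2 := by
    have hsub : R1 ⊆ {s(x, y), s(x, z)} := by
      rintro e ⟨u, v, hadj, hu, hv, rfl⟩
      rw [hXA, Set.mem_singleton_iff] at hu
      rw [hXB] at hv
      rcases hv with hv | hv
      · rw [hu, hv]; exact Set.mem_insert _ _
      · rw [Set.mem_singleton_iff] at hv
        rw [hu, hv]; exact Set.mem_insert_of_mem _ rfl
    refine le_trans (Set.ncard_le_ncard hsub (Set.toFinite _)) ?_
    refine le_trans (Set.ncard_insert_le _ _) ?_
    rw [Set.ncard_singleton]
  -- decomposition of ∂A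
  have hsubA : edgeBoundary G A ⊆ (R1 ∪ P1) ∪ (P2 ∪ C) := by
    intro e he
    rw [mem_eb] at he
    obtain ⟨u, v, hadj, hu, hv, rfl⟩ := he
    have hvB : v ∈ B := by rw [hAB]; exact hv
    by_cases huX : u ∈ X <;> by_cases hvX : v ∈ X
    · exact Or.inl (Or.inl ⟨u, v, hadj, ⟨hu, huX⟩, ⟨hvB, hvX⟩, rfl⟩)
    · exact Or.inl (Or.inr ⟨u, v, hadj, ⟨hu, huX⟩, ⟨hvB, hvX⟩, rfl⟩)
    · exact Or.inr (Or.inl ⟨v, u, hadj.symm, ⟨hvB, hvX⟩, ⟨hu, huX⟩, Sym2.eq_swap⟩)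
    · exact Or.inr (Or.inr ⟨u, v, hadj, ⟨hu, huX⟩, ⟨hvB, hvX⟩, rfl⟩)
  have hupA : (edgeBoundary G A).ncard ≤ R1.ncard + P1.ncard + (P2.ncard + C.ncard) := by
    refine le_trans (Set.ncard_le_ncard hsubA (Set.toFinite _)) ?_
    refine le_trans (Set.ncard_union_le _ _) ?_
    have h1 := Set.ncard_union_le R1 P1
    have h2 := Set.ncard_union_le P2 C
    omega
  -- decomposition of ∂X
  have hsubX : (P1 ∪ P2) ∪ (Q1 ∪ Q2) ⊆ edgeBoundary G X := by
    rw [eb_eq_cross]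
    have hXAX : XA ⊆ X := Set.inter_subset_right
    have hXBX : XB ⊆ X := Set.inter_subset_right
    have hYAX : YA ⊆ Xᶜ := fun a ha => ha.2
    have hYBX : YB ⊆ Xᶜ := fun a ha => ha.2
    refine Set.union_subset (Set.union_subset ?_ ?_) (Set.union_subset ?_ ?_)
    · exact cross_mono hXAX hYBX
    · exact cross_mono hXBX hYAX
    · exact cross_mono hXAX hYAX
    · exact cross_mono hXBX hYBX
  have D1 : Disjoint P1 P2 :=
    cross_disj_right (Set.disjoint_union_left.2 ⟨dXAYA, dYAYB.symm⟩)
  have D2 : Disjoint Q1 Q2 :=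
    cross_disj_right (Set.disjoint_union_left.2 ⟨dXAYB, dYAYB⟩)
  have D3 : Disjoint (P1 ∪ P2) (Q1 ∪ Q2) := by
    refine Set.disjoint_union_left.2 ⟨Set.disjoint_union_right.2 ⟨?_, ?_⟩,
      Set.disjoint_union_right.2 ⟨?_, ?_⟩⟩
    · exact cross_disj_right (Set.disjoint_union_left.2 ⟨dXAYA, dYAYB.symm⟩)
    · exact cross_disj_left (Set.disjoint_union_left.2 ⟨dXAXB, dXBYB.symm⟩)
    · exact cross_disj_left (Set.disjoint_union_left.2 ⟨dXAXB.symm, dXAYA.symm⟩)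
    · exact cross_disj_right (Set.disjoint_union_left.2 ⟨dXBYB, dYAYB⟩)
  have hlowX : P1.ncard + P2.ncard + (Q1.ncard + Q2.ncard) ≤ (edgeBoundary G X).ncard := by
    have h0 : ((P1 ∪ P2) ∪ (Q1 ∪ Q2)).ncard = P1.ncard + P2.ncard + (Q1.ncard + Q2.ncard) := by
      rw [Set.ncard_union_eq D3 (Set.toFinite _) (Set.toFinite _),
        Set.ncard_union_eq D1 (Set.toFinite _) (Set.toFinite _),
        Set.ncard_union_eq D2 (Set.toFinite _) (Set.toFinite _)]
    rw [← h0]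
    exact Set.ncard_le_ncard hsubX (Set.toFinite _)
  -- final arithmetic
  by_cases hCne : C.Nonempty
  · have h2Q1 := hK5 hCne
    omega
  · have hC0 : C.ncard = 0 := by
      rw [Set.not_nonempty_iff_eq_empty] at hCne
      rw [hCne, Set.ncard_empty]
    omega

lemma connIn_union {S T : Set V} (hS : ConnIn G S) (hT : ConnIn G T) {a b : V}
    (ha : a ∈ S) (hb : b ∈ T) (hab : G.Adj a b) : ConnIn G (S ∪ T) := by
  refine ⟨⟨a, Or.inl ha⟩, ?_⟩
  have bridge : LinkedIn G (S ∪ T) a b :=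
    LinkedIn.of_adj hab (Or.inl ha) (Or.inr hb)
  have toA : ∀ u ∈ S ∪ T, LinkedIn G (S ∪ T) u a := by
    intro u hu
    rcases hu with hu | hu
    · exact (hS.2 u hu a ha).mono Set.subset_union_left
    · exact ((hT.2 u hu b hb).mono Set.subset_union_right).trans bridge.symm
  intro u hu v hv
  exact (toA u hu).trans (toA v hv).symm

lemma cut_of_partition [Finite V] {A B : Set V} (hAB : B = Aᶜ)
    (hA : ConnIn G A) (hB : ConnIn G B) (hA3 : 3 ≤ A.ncard) (hB3 : 3 ≤ B.ncard) :
    IsKRestrictedEdgeCut G 3 (edgeBoundary G A) := by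
  obtain ⟨b₀, hb₀⟩ := hB.1
  refine cut_lemma hA hA3 ⟨b₀, by rw [← hAB]; exact hb₀⟩ ?_
  intro v hv
  have hvB : v ∈ B := by rw [hAB]; exact hv
  have hsub : B ⊆ ((G.deleteEdges (edgeBoundary G A)).connectedComponentMk v).supp := by
    intro t ht
    rw [ConnectedComponent.mem_supp_iff, ConnectedComponent.eq]
    refine reach_del_of_linkedIn_compl ?_
    have := hB.2 t ht v hvB
    exact this.mono hAB.le
  exact le_trans hB3 (Set.ncard_le_ncard hsub (Set.toFinite _))

/-- Case 2 conclusion packaged. -/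
lemma case2_final [Finite V] {X A B : Set V} {x y z : V}
    (hAB : B = Aᶜ)
    (hXA : A ∩ X = {x}) (hXB : B ∩ X = {y, z}) (hyz : y ≠ z)
    (hA : ConnIn G A) (hB : ConnIn G B) (hA3 : 3 ≤ A.ncard) (hB3 : 3 ≤ B.ncard)
    (ymax : ∀ u v w, u ∉ X → v ∉ X → w ∉ X → G.Adj u v → G.Adj u w → v = w) :
    ∃ S : Set (Sym2 V), IsKRestrictedEdgeCut G 3 S ∧
      S.ncard ≤ (edgeBoundary G X).ncard :=
  ⟨edgeBoundary G A, cut_of_partition hAB hA hB hA3 hB3,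
    case2_count hAB hXA hXB hyz hA hB hA3 hB3 ymax⟩

/-- Case 1 conclusion packaged. -/
lemma case1_final [Finite V] (hconn : G.Connected) {X : Set V}
    (hX3 : X.ncard = 3) (hXconn : ConnIn G X)
    {v₁ : V} (hv₁X : v₁ ∉ X)
    (hv₁big : 3 ≤ ((G.deleteEdges (edgeBoundary G X)).connectedComponentMk v₁).supp.ncard) :
    ∃ S : Set (Sym2 V), IsKRestrictedEdgeCut G 3 S ∧
      S.ncard ≤ (edgeBoundary G X).ncard := by
  classical
  set D := G.deleteEdges (edgeBoundary G X) with hD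
  set W : Set V := X ∪ {v | v ∉ X ∧ (D.connectedComponentMk v).supp.ncard ≤ 2} with hW
  have hWX : X ⊆ W := Set.subset_union_left
  have hmemW : ∀ v, v ∉ X → (D.connectedComponentMk v).supp.ncard ≤ 2 → v ∈ W := by
    intro v h1 h2
    rw [hW]
    exact Or.inr ⟨h1, h2⟩
  have hmemW' : ∀ v, v ∈ W → v ∈ X ∨ (v ∉ X ∧ (D.connectedComponentMk v).supp.ncard ≤ 2) := by
    intro v hv
    rw [hW] at hv
    exact hv
  have hDadj : ∀ a b, D.Adj a b → a ∉ X →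
      (b ∉ X ∧ D.connectedComponentMk b = D.connectedComponentMk a) := by
    intro a b hab ha
    have h1 : G.Adj a b ∧ s(a, b) ∉ edgeBoundary G X := by
      rw [hD, deleteEdges_adj] at hab
      exact hab
    have hbX : b ∉ X := by
      intro hb
      exact h1.2 (mem_eb.2 ⟨b, a, h1.1.symm, hb, ha, Sym2.eq_swap⟩)
    refine ⟨hbX, ConnectedComponent.eq.2 ?_⟩
    exact hab.symm.reachable
  have hstep : ∀ a b, D.Adj a b → a ∉ W → b ∉ W := by
    intro a b hab haW
    have haX : a ∉ X := fun h => haW (hWX h)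
    obtain ⟨hbX, hcomp⟩ := hDadj a b hab haX
    intro hbW
    rcases hmemW' b hbW with hb | hb
    · exact hbX hb
    · refine haW (hmemW a haX ?_)
      rw [← hcomp]
      exact hb.2
  have hWcNe : Wᶜ.Nonempty := by
    refine ⟨v₁, fun h => ?_⟩
    rcases hmemW' v₁ h with h1 | h1
    · exact hv₁X h1
    · omega
  have hXne : X.Nonempty := (Set.ncard_pos (Set.toFinite X)).1 (by omega)
  obtain ⟨x₀, hx₀⟩ := hXne
  have keyW : ∀ u, u ∈ W → ∃ t ∈ X, LinkedIn G W u t := by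
    intro u hu
    rcases hmemW' u hu with huX | huSm
    · exact ⟨u, huX, LinkedIn.refl (hWX huX)⟩
    · obtain ⟨p⟩ := hconn.preconnected u x₀
      have key : ∀ (a b : V) (p : G.Walk a b), b ∈ X →
          a ∉ X ∧ (D.connectedComponentMk a).supp.ncard ≤ 2 → ∃ t ∈ X, LinkedIn G W a t := by
        intro a b p
        induction p with
        | nil => intro hbX ha; exact absurd hbX ha.1
        | @cons a m w hadj q ih =>
          intro hbX ha
          by_cases hmX : m ∈ X
          · exact ⟨m, hmX, LinkedIn.of_adj hadj (hmemW a ha.1 ha.2) (hWX hmX)⟩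
          · have hDadj' : D.Adj a m := by
              rw [hD, deleteEdges_adj]
              exact ⟨hadj, not_mem_eb_of_both (Or.inr ⟨ha.1, hmX⟩)⟩
            obtain ⟨-, hcomp⟩ := hDadj a m hDadj' ha.1
            have hm : m ∉ X ∧ (D.connectedComponentMk m).supp.ncard ≤ 2 :=
              ⟨hmX, by rw [hcomp]; exact ha.2⟩
            obtain ⟨t, ht, hlink⟩ := ih hbX hm
            exact ⟨t, ht,
              (LinkedIn.of_adj hadj (hmemW a ha.1 ha.2) (hmemW m hm.1 hm.2)).trans hlink⟩
      exact key u x₀ p hx₀ huSm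
  have hWconn : ConnIn G W := by
    refine ⟨⟨x₀, hWX hx₀⟩, ?_⟩
    intro u hu v hv
    obtain ⟨tu, htu, hu'⟩ := keyW u hu
    obtain ⟨tv, htv, hv'⟩ := keyW v hv
    have hmid : LinkedIn G W tu tv := (hXconn.2 tu htu tv htv).mono hWX
    exact (hu'.trans hmid).trans hv'.symm
  have hW3 : 3 ≤ W.ncard := by
    rw [← hX3]
    exact Set.ncard_le_ncard hWX (Set.toFinite _)
  have hcompW : ∀ v, v ∉ W →
      3 ≤ ((G.deleteEdges (edgeBoundary G W)).connectedComponentMk v).supp.ncard := by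
    intro v hvW
    have hsub : (D.connectedComponentMk v).supp ⊆
        ((G.deleteEdges (edgeBoundary G W)).connectedComponentMk v).supp := by
      intro t ht
      rw [ConnectedComponent.mem_supp_iff, ConnectedComponent.eq] at ht ⊢
      have hDt : D.Reachable v t := ht.symm
      rw [hD] at hDt
      exact (reach_transfer (fun a b hab ha => hstep a b (by rw [hD]; exact hab) ha)
        hDt hvW).symm
    have hvbig : 3 ≤ (D.connectedComponentMk v).supp.ncard := by
      have hvX : v ∉ X := fun h => hvW (hWX h)
      by_contra hlt
      push_neg at hlt
      exact hvW (hmemW v hvX (by omega))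
    exact le_trans hvbig (Set.ncard_le_ncard hsub (Set.toFinite _))
  refine ⟨edgeBoundary G W, cut_lemma hWconn hW3 hWcNe hcompW, ?_⟩
  have hsub : edgeBoundary G W ⊆ edgeBoundary G X := by
    intro e he
    rw [mem_eb] at he ⊢
    obtain ⟨u, v, hadj, huW, hvW, rfl⟩ := he
    have hvX : v ∉ X := fun h => hvW (hWX h)
    rcases hmemW' u huW with huX | huSm
    · exact ⟨u, v, hadj, huX, hvX, rfl⟩
    · exfalso
      have hD' : D.Adj u v := by
        rw [hD, deleteEdges_adj]
        exact ⟨hadj, not_mem_eb_of_both (Or.inr ⟨huSm.1, hvX⟩)⟩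
      obtain ⟨-, hcomp⟩ := hDadj u v hD' huSm.1
      exact hvW (hmemW v hvX (by rw [hcomp]; exact huSm.2))
  exact Set.ncard_le_ncard hsub (Set.toFinite _)

end Case2

end Scratch

/-- If G is connected of order at least 6 and has a 3-restricted
edge-cut, then λ₃(G) ≤ ξ₃(G). -/
theorem stmt7 {V : Type*} [Fintype V] (G : SimpleGraph V)
    (hconn : G.Connected) (hcard : 6 ≤ Fintype.card V)
    (hex : ∃ S : Set (Sym2 V), IsKRestrictedEdgeCut G 3 S) :
    lamK G 3 ≤ ((xi3 G : ℕ) : ℕ∞) := by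
  classical
  open Scratch in
  have hsetne : {k | ∃ X : Set V, X.ncard = 3 ∧ (G.induce X).Connected ∧
      k = (edgeBoundary G X).ncard}.Nonempty := by
    obtain ⟨X, h3, hc⟩ := Scratch.exists_triple hconn (by omega)
    exact ⟨(edgeBoundary G X).ncard, X, h3, hc, rfl⟩
  obtain ⟨X, hX3, hXc, hXval⟩ := Nat.sInf_mem hsetne
  have hxi : xi3 G = (edgeBoundary G X).ncard := hXval
  have hXconn : Scratch.ConnIn G X :=
    Scratch.connIn_of_induce hXc ((Set.ncard_pos (Set.toFinite X)).1 (by omega))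
  have main : ∃ S : Set (Sym2 V), IsKRestrictedEdgeCut G 3 S ∧
      S.ncard ≤ (edgeBoundary G X).ncard := by
    by_cases hbig : ∃ v, v ∉ X ∧
        3 ≤ ((G.deleteEdges (edgeBoundary G X)).connectedComponentMk v).supp.ncard
    · obtain ⟨v₁, h1, h2⟩ := hbig
      exact Scratch.case1_final hconn hX3 hXconn h1 h2
    · push_neg at hbig
      have hsmall : ∀ v, v ∉ X →
          ((G.deleteEdges (edgeBoundary G X)).connectedComponentMk v).supp.ncard ≤ 2 :=
        fun v hv => by have := hbig v hv; omega
      have ymax : ∀ u v w, u ∉ X → v ∉ X → w ∉ X → G.Adj u v → G.Adj u w → v = w := by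
        intro u v w hu hv hw h1 h2
        by_contra hne
        have hD1 : (G.deleteEdges (edgeBoundary G X)).Adj u v := by
          rw [deleteEdges_adj]
          exact ⟨h1, Scratch.not_mem_eb_of_both (Or.inr ⟨hu, hv⟩)⟩
        have hD2 : (G.deleteEdges (edgeBoundary G X)).Adj u w := by
          rw [deleteEdges_adj]
          exact ⟨h2, Scratch.not_mem_eb_of_both (Or.inr ⟨hu, hw⟩)⟩
        have hsub : ({u, v, w} : Set V) ⊆
            ((G.deleteEdges (edgeBoundary G X)).connectedComponentMk u).supp := by
          intro t ht
          rw [ConnectedComponent.mem_supp_iff, ConnectedComponent.eq]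
          rcases ht with rfl | rfl | rfl
          · exact Reachable.refl _
          · exact hD1.symm.reachable
          · exact hD2.symm.reachable
        have h33 : ({u, v, w} : Set V).ncard = 3 := by
          rw [Set.ncard_eq_three]
          exact ⟨u, v, w, h1.ne, h2.ne, hne, rfl⟩
        have hle := Set.ncard_le_ncard hsub (Set.toFinite _)
        have hs := hsmall u hu
        omega
      obtain ⟨S₀, hS₀sub, hS₀dis, hS₀comp⟩ := hex
      haveI hNE : Nonempty V := Fintype.card_pos_iff.1 (by omega)
      have hnp : ¬ (G.deleteEdges S₀).Preconnected := by
        intro hp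
        exact hS₀dis ((connected_iff _).2 ⟨hp, hNE⟩)
      obtain ⟨u₀, hu₀⟩ := not_forall.1 hnp
      obtain ⟨v₀, hv₀⟩ := not_forall.1 hu₀
      set A₁ := ((G.deleteEdges S₀).connectedComponentMk u₀).supp with hA₁
      have hA₁conn : Scratch.ConnIn G A₁ := Scratch.connIn_supp _
      have hA₁3 : 3 ≤ A₁.ncard := hS₀comp _
      have hv₀A : v₀ ∉ A₁ := by
        intro h
        rw [hA₁, ConnectedComponent.mem_supp_iff, ConnectedComponent.eq] at h
        exact hv₀ h.symm
      set K : V → Set V := fun v =>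
        ((G.deleteEdges (edgeBoundary G A₁)).connectedComponentMk v).supp with hKdef
      have hKmem : ∀ v, v ∈ K v := by
        intro v
        simp only [hKdef, ConnectedComponent.mem_supp_iff]
      have hKsub : ∀ v, v ∉ A₁ → K v ⊆ A₁ᶜ := by
        intro v hv w hw
        simp only [hKdef, ConnectedComponent.mem_supp_iff, ConnectedComponent.eq] at hw
        intro hwA
        exact hv (Scratch.side_of_reach hw hwA)
      have hKconn : ∀ v, Scratch.ConnIn G (K v) := fun v => Scratch.connIn_supp _
      have hKclosed : ∀ v, v ∉ A₁ → ∀ a ∈ K v, ∀ b, b ∉ A₁ → G.Adj a b → b ∈ K v := by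
        intro v hv a ha b hb hab
        have haA : a ∉ A₁ := hKsub v hv ha
        have hadj : (G.deleteEdges (edgeBoundary G A₁)).Adj a b := by
          rw [deleteEdges_adj]
          exact ⟨hab, Scratch.not_mem_eb_of_both (Or.inr ⟨haA, hb⟩)⟩
        simp only [hKdef, ConnectedComponent.mem_supp_iff] at ha ⊢
        rw [← ha]
        exact ConnectedComponent.eq.2 hadj.symm.reachable
      have hK3 : ∀ v, v ∉ A₁ → 3 ≤ (K v).ncard := by
        intro v hv
        have hstep : ∀ a b, (G.deleteEdges S₀).Adj a b → a ∉ A₁ → b ∉ A₁ := by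
          intro a b hab ha hb
          refine ha ?_
          rw [hA₁, ConnectedComponent.mem_supp_iff] at hb ⊢
          rw [← hb]
          exact ConnectedComponent.eq.2 hab.reachable
        have hsub0 : ((G.deleteEdges S₀).connectedComponentMk v).supp ⊆ K v := by
          intro t ht
          rw [ConnectedComponent.mem_supp_iff, ConnectedComponent.eq] at ht
          simp only [hKdef, ConnectedComponent.mem_supp_iff, ConnectedComponent.eq]
          exact (Scratch.reach_transfer hstep ht.symm hv).symm
        exact le_trans (hS₀comp _) (Set.ncard_le_ncard hsub0 (Set.toFinite _))
      have hKeq : ∀ v w, w ∈ K v → K w = K v := by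
        intro v w hw
        simp only [hKdef, ConnectedComponent.mem_supp_iff] at hw
        simp only [hKdef, hw]
      have hmeet : ∀ S : Set V, Scratch.ConnIn G S → 3 ≤ S.ncard → ∃ t ∈ S, t ∈ X := by
        intro S hS h3
        by_contra hno
        push_neg at hno
        obtain ⟨s₀, hs₀⟩ := hS.1
        have hsub : S ⊆ ((G.deleteEdges (edgeBoundary G X)).connectedComponentMk s₀).supp := by
          intro t ht
          rw [ConnectedComponent.mem_supp_iff, ConnectedComponent.eq]
          have hlink : Scratch.LinkedIn G Xᶜ t s₀ :=
            (hS.2 t ht s₀ hs₀).mono (fun w hw => hno w hw)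
          exact Scratch.reach_del_of_linkedIn_compl hlink
        have hle := Set.ncard_le_ncard hsub (Set.toFinite _)
        have := hsmall s₀ (hno s₀ hs₀)
        omega
      obtain ⟨x₁, hx₁A, hx₁X⟩ := hmeet A₁ hA₁conn hA₁3
      obtain ⟨x₂, hx₂K, hx₂X⟩ := hmeet (K v₀) (hKconn v₀) (hK3 v₀ hv₀A)
      by_cases hone : ∀ v, v ∉ A₁ → v ∈ K v₀
      · have hcompl : K v₀ = A₁ᶜ := subset_antisymm (hKsub v₀ hv₀A) hone
        have hdisj : Disjoint (A₁ ∩ X) ((K v₀) ∩ X) := by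
          rw [hcompl]
          exact (disjoint_compl_right.mono Set.inter_subset_left Set.inter_subset_left)
        have hunion : (A₁ ∩ X) ∪ ((K v₀) ∩ X) = X := by
          rw [hcompl]
          ext t
          constructor
          · rintro (ht | ht) <;> exact ht.2
          · intro ht
            by_cases htA : t ∈ A₁
            · exact Or.inl ⟨htA, ht⟩
            · exact Or.inr ⟨htA, ht⟩
        have hXsplit : (A₁ ∩ X).ncard + ((K v₀) ∩ X).ncard = 3 := by
          rw [← Set.ncard_union_eq hdisj (Set.toFinite _) (Set.toFinite _), hunion, hX3]
        have h1le : 1 ≤ (A₁ ∩ X).ncard :=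
          (Set.ncard_pos (Set.toFinite _)).2 ⟨x₁, hx₁A, hx₁X⟩
        have h2le : 1 ≤ ((K v₀) ∩ X).ncard :=
          (Set.ncard_pos (Set.toFinite _)).2 ⟨x₂, hx₂K, hx₂X⟩
        by_cases hc1 : (A₁ ∩ X).ncard = 1
        · obtain ⟨x, hx⟩ := Set.ncard_eq_one.1 hc1
          have hc2 : ((K v₀) ∩ X).ncard = 2 := by omega
          obtain ⟨y, z, hyz, hyzeq⟩ := Set.ncard_eq_two.1 hc2
          exact Scratch.case2_final hcompl hx hyzeq hyz hA₁conn (hKconn v₀)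
            hA₁3 (hK3 v₀ hv₀A) ymax
        · have hc2 : ((K v₀) ∩ X).ncard = 1 := by omega
          obtain ⟨x, hx⟩ := Set.ncard_eq_one.1 hc2
          have hc1' : (A₁ ∩ X).ncard = 2 := by omega
          obtain ⟨y, z, hyz, hyzeq⟩ := Set.ncard_eq_two.1 hc1'
          have hAB : A₁ = (K v₀)ᶜ := by rw [hcompl, compl_compl]
          exact Scratch.case2_final hAB hx hyzeq hyz (hKconn v₀) hA₁conn
            (hK3 v₀ hv₀A) hA₁3 ymax
      · push_neg at hone
        obtain ⟨v₂, hv₂A, hv₂K⟩ := hone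
        obtain ⟨x₃, hx₃K, hx₃X⟩ := hmeet (K v₂) (hKconn v₂) (hK3 v₂ hv₂A)
        have hK12 : ∀ w, w ∈ K v₀ → w ∈ K v₂ → False := by
          intro w h1 h2
          have e1 := hKeq v₀ w h1
          have e2 := hKeq v₂ w h2
          exact hv₂K (by rw [← e1, e2]; exact hKmem v₂)
        have hx₁₂ : x₁ ≠ x₂ := fun h => (hKsub v₀ hv₀A hx₂K) (h ▸ hx₁A)
        have hx₁₃ : x₁ ≠ x₃ := fun h => (hKsub v₂ hv₂A hx₃K) (h ▸ hx₁A)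
        have hx₂₃ : x₂ ≠ x₃ := fun h => hK12 x₂ hx₂K (h ▸ hx₃K)
        have hXeq : ({x₁, x₂, x₃} : Set V) = X := by
          refine Set.eq_of_subset_of_ncard_le ?_ ?_ (Set.toFinite _)
          · rintro t (rfl | rfl | rfl)
            · exact hx₁X
            · exact hx₂X
            · exact hx₃X
          · rw [hX3]
            have : ({x₁, x₂, x₃} : Set V).ncard = 3 := by
              rw [Set.ncard_eq_three]
              exact ⟨x₁, x₂, x₃, hx₁₂, hx₁₃, hx₂₃, rfl⟩
            omega
        have hcov : ∀ v, v ∉ A₁ → v ∈ K v₀ ∪ K v₂ := by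
          intro v hv
          obtain ⟨t, htK, htX⟩ := hmeet (K v) (hKconn v) (hK3 v hv)
          have htA : t ∉ A₁ := hKsub v hv htK
          have ht3 : t ∈ ({x₁, x₂, x₃} : Set V) := by rw [hXeq]; exact htX
          rcases ht3 with rfl | rfl | rfl
          · exact absurd hx₁A htA
          · refine Or.inl ?_
            have e1 := hKeq v t htK
            have e2 := hKeq v₀ t hx₂K
            rw [← e2, e1]
            exact hKmem v
          · refine Or.inr ?_
            have e1 := hKeq v t htK
            have e2 := hKeq v₂ t hx₃K
            rw [← e2, e1]
            exact hKmem v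
        have hbridge : ∃ b ∈ A₁, ∃ a ∈ K v₂, G.Adj a b := by
          have huniv : Scratch.LinkedIn G Set.univ v₂ x₁ := by
            obtain ⟨p⟩ := hconn.preconnected v₂ x₁
            exact ⟨p, fun _ _ => trivial⟩
          obtain ⟨a, b, haT, -, -, hbT, hab⟩ :=
            Scratch.exists_exit (T := K v₂) huniv (hKmem v₂)
              (fun h => (hKsub v₂ hv₂A h) hx₁A)
          have hbA : b ∈ A₁ := by
            by_contra hbA
            exact hbT (hKclosed v₂ hv₂A a haT b hbA hab)
          exact ⟨b, hbA, a, haT, hab⟩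
        obtain ⟨b, hbA₁, a, haK₂, hab⟩ := hbridge
        have hBconn : Scratch.ConnIn G (A₁ ∪ K v₂) :=
          Scratch.connIn_union hA₁conn (hKconn v₂) hbA₁ haK₂ hab.symm
        have hAB : A₁ ∪ K v₂ = (K v₀)ᶜ := by
          ext t
          constructor
          · intro ht htK
            rcases ht with ht | ht
            · exact (hKsub v₀ hv₀A htK) ht
            · exact hK12 t htK ht
          · intro ht
            by_cases htA : t ∈ A₁
            · exact Or.inl htA
            · rcases hcov t htA with h | h
              · exact absurd h ht
              · exact Or.inr h
        have hXA : (K v₀) ∩ X = {x₂} := by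
          apply subset_antisymm
          · rintro t ⟨htK, htX⟩
            have ht3 : t ∈ ({x₁, x₂, x₃} : Set V) := by rw [hXeq]; exact htX
            rcases ht3 with rfl | rfl | rfl
            · exact absurd hx₁A (hKsub v₀ hv₀A htK)
            · rfl
            · exact absurd (hK12 t htK hx₃K) not_false
          · intro t ht
            rw [Set.mem_singleton_iff] at ht
            rw [ht]
            exact ⟨hx₂K, hx₂X⟩
        have hXB : (A₁ ∪ K v₂) ∩ X = {x₁, x₃} := by
          apply subset_antisymm
          · rintro t ⟨htB, htX⟩
            have ht3 : t ∈ ({x₁, x₂, x₃} : Set V) := by rw [hXeq]; exact htX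
            rcases ht3 with rfl | rfl | rfl
            · exact Set.mem_insert _ _
            · exfalso
              rcases htB with h | h
              · exact (hKsub v₀ hv₀A hx₂K) h
              · exact hK12 t hx₂K h
            · exact Set.mem_insert_of_mem _ rfl
          · rintro t (rfl | rfl)
            · exact ⟨Or.inl hx₁A, hx₁X⟩
            · exact ⟨Or.inr hx₃K, hx₃X⟩
        have hB3 : 3 ≤ (A₁ ∪ K v₂).ncard :=
          le_trans hA₁3 (Set.ncard_le_ncard Set.subset_union_left (Set.toFinite _))
        exact Scratch.case2_final hAB hXA hXB hx₁₃ (hKconn v₀) hBconn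
          (hK3 v₀ hv₀A) hB3 ymax
  obtain ⟨S, hScut, hSle⟩ := main
  have hmem : ((S.ncard : ℕ∞)) ∈ {n : ℕ∞ | ∃ S' : Set (Sym2 V),
      IsKRestrictedEdgeCut G 3 S' ∧ ((S'.ncard : ℕ) : ℕ∞) = n} := ⟨S, hScut, rfl⟩
  refine le_trans (sInf_le hmem) ?_
  have hfin : S.ncard ≤ xi3 G := by rw [hxi]; exact hSle
  exact_mod_cast hfin
end

section
/- Let G be a simple graph of order m ≥ 5 with δ(G) ≥ 2 and let n ≥ 4. Then ξ₃(G ⊠ Cₙ) = 9δ(G) if ξ(G) = 2δ(G) − 2, and ξ₃(G ⊠ Cₙ) = 9δ(G) + 2 if ξ(G) > 2δ(G) − 2. -/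
open SimpleGraph

variable {V : Type*}

section AuxStmt10

lemma fin_sub_val' {n : ℕ} (a b : Fin n) :
    (a - b).val = if b.val ≤ a.val then a.val - b.val else a.val + n - b.val := by
  have hb := b.isLt; have ha := a.isLt
  rw [Fin.sub_def]; simp only
  split
  · have : n - b.val + a.val = n + (a.val - b.val) := by omega
    rw [this, Nat.add_mod_left, Nat.mod_eq_of_lt (by omega)]
  · rw [Nat.mod_eq_of_lt (by omega)]; omega

lemma fin_add_val' {n : ℕ} (a b : Fin n) :
    (a + b).val = if a.val + b.val < n then a.val + b.val else a.val + b.val - n := by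
  have hb := b.isLt; have ha := a.isLt
  rw [Fin.add_def]; simp only
  split
  · rw [Nat.mod_eq_of_lt (by omega)]
  · have : a.val + b.val = n + (a.val + b.val - n) := by omega
    rw [this, Nat.add_mod_left, Nat.mod_eq_of_lt (by omega)]; omega

lemma cyc_adj_val {m : ℕ} (u v : Fin (m+4)) :
    (cycleGraph (m+4)).Adj u v ↔ (u - v).val = 1 ∨ (v - u).val = 1 := by
  rw [cycleGraph_adj (n := m+2)]
  constructor
  · rintro (h | h) <;> [left; right] <;> rw [h] <;> rfl
  · rintro (h | h) <;> [left; right] <;> exact Fin.ext h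

lemma cyc_triangle_free {m : ℕ} (i j k : Fin (m+4)) (hij : (cycleGraph (m+4)).Adj i j)
    (hjk : (cycleGraph (m+4)).Adj j k) (hik : (cycleGraph (m+4)).Adj i k) : False := by
  rw [cyc_adj_val, fin_sub_val', fin_sub_val'] at hij hjk hik
  have := i.isLt; have := j.isLt; have := k.isLt
  split_ifs at hij hjk hik <;> omega

lemma cyc_nbr {m : ℕ} (i : Fin (m+4)) :
    (cycleGraph (m+4)).neighborSet i = {i - 1, i + 1} :=
  cycleGraph_neighborSet (n := m+2)

lemma cyc_adj_iff {m : ℕ} (i j : Fin (m+4)) :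
    (cycleGraph (m+4)).Adj i j ↔ j = i - 1 ∨ j = i + 1 := by
  rw [← mem_neighborSet, cyc_nbr]; simp

lemma sub_ne_add' {m : ℕ} (i : Fin (m+4)) : i - 1 ≠ i + 1 := by
  have := i.isLt
  have h1 : (1 : Fin (m+4)).val = 1 := rfl
  rw [Ne, Fin.ext_iff, fin_sub_val', fin_add_val', h1]
  split_ifs <;> omega

lemma ne_sub_one' {m : ℕ} (i : Fin (m+4)) : i ≠ i - 1 := by
  have := i.isLt
  have h1 : (1 : Fin (m+4)).val = 1 := rfl
  rw [Ne, Fin.ext_iff, fin_sub_val', h1]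
  split_ifs <;> omega

lemma ne_add_one' {m : ℕ} (i : Fin (m+4)) : i ≠ i + 1 := by
  have := i.isLt
  have h1 : (1 : Fin (m+4)).val = 1 := rfl
  rw [Ne, Fin.ext_iff, fin_add_val', h1]
  split_ifs <;> omega

lemma cyc_not_adj_02 {m : ℕ} : ¬ (cycleGraph (m+4)).Adj 0 2 := by
  have h2 : (2 : Fin (m+4)).val = 2 := rfl
  have h0 : (0 : Fin (m+4)).val = 0 := rfl
  rw [cyc_adj_val, fin_sub_val', fin_sub_val', h2, h0]
  split_ifs <;> omega

lemma cyc_adj_01 {m : ℕ} : (cycleGraph (m+4)).Adj 0 1 := by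
  rw [cyc_adj_iff]; right; rw [zero_add]

lemma cyc_adj_12 {m : ℕ} : (cycleGraph (m+4)).Adj 1 2 := by
  rw [cyc_adj_iff]; right; rfl

section ProdAux
variable {α : Type*} (G : SimpleGraph α) {m : ℕ}

lemma prod_nbr (u : α) (i : Fin (m+4)) :
    (strongProd G (cycleGraph (m+4))).neighborSet (u,i) =
      ((fun v => (v, i-1)) '' insert u (G.neighborSet u)) ∪
      ((fun v => (v, i+1)) '' insert u (G.neighborSet u)) ∪
      ((fun v => (v, i)) '' (G.neighborSet u)) := by
  ext ⟨v, j⟩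
  simp only [mem_neighborSet, strongProd, cyc_adj_iff, Set.mem_union, Set.mem_image,
    Set.mem_insert_iff, Prod.mk.injEq]
  constructor
  · rintro (⟨h1, (h2 | h2)⟩ | ⟨h1, h2⟩ | ⟨h1, (h2 | h2)⟩)
    · exact Or.inl (Or.inl ⟨v, Or.inl h1.symm, rfl, h2.symm⟩)
    · exact Or.inl (Or.inr ⟨v, Or.inl h1.symm, rfl, h2.symm⟩)
    · exact Or.inr ⟨v, h2, rfl, h1⟩
    · exact Or.inl (Or.inl ⟨v, Or.inr h1, rfl, h2.symm⟩)
    · exact Or.inl (Or.inr ⟨v, Or.inr h1, rfl, h2.symm⟩)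
  · rintro ((⟨w, hw, rfl, rfl⟩ | ⟨w, hw, rfl, rfl⟩) | ⟨w, hw, rfl, rfl⟩)
    · rcases hw with rfl | hw
      · exact Or.inl ⟨rfl, Or.inl rfl⟩
      · exact Or.inr (Or.inr ⟨hw, Or.inl rfl⟩)
    · rcases hw with rfl | hw
      · exact Or.inl ⟨rfl, Or.inr rfl⟩
      · exact Or.inr (Or.inr ⟨hw, Or.inr rfl⟩)
    · exact Or.inr (Or.inl ⟨rfl, hw⟩)

lemma inj_snd' {β γ : Type*} (c : γ) : Function.Injective (fun v : β => (v, c)) := by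
  intro a b h; simpa using h

lemma prod_deg [Fintype α] (u : α) (i : Fin (m+4)) :
    ((strongProd G (cycleGraph (m+4))).neighborSet (u,i)).ncard = 3 * deg G u + 2 := by
  have hd : ∀ (j k : Fin (m+4)) (S T : Set α), j ≠ k →
      Disjoint ((fun v => (v, j)) '' S) ((fun v => (v, k)) '' T) := by
    intro j k S T hjk
    rw [Set.disjoint_left]
    rintro ⟨a, b⟩ ⟨w, hw, h⟩ ⟨w', hw', h'⟩
    simp only [Prod.mk.injEq] at h h'
    exact hjk (h.2.trans h'.2.symm)
  rw [prod_nbr,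
    Set.ncard_union_eq (by
      rw [Set.disjoint_union_left]
      exact ⟨hd _ _ _ _ (ne_sub_one' i).symm, hd _ _ _ _ (ne_add_one' i).symm⟩)
      (Set.toFinite _) (Set.toFinite _),
    Set.ncard_union_eq (hd _ _ _ _ (sub_ne_add' i)) (Set.toFinite _) (Set.toFinite _),
    Set.ncard_image_of_injective _ (inj_snd' _), Set.ncard_image_of_injective _ (inj_snd' _),
    Set.ncard_image_of_injective _ (inj_snd' _)]
  have hu : u ∉ G.neighborSet u := fun h => G.irrefl h
  rw [Set.ncard_insert_of_notMem hu (Set.toFinite _), deg]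
  ring

end ProdAux

lemma boundary_three [Fintype V] (P : SimpleGraph V) (a b c : V)
    (hab : a ≠ b) (hac : a ≠ c) (hbc : b ≠ c) :
    (edgeBoundary P ({a,b,c} : Set V)).ncard =
      (P.neighborSet a \ {a,b,c}).ncard + (P.neighborSet b \ {a,b,c}).ncard +
        (P.neighborSet c \ {a,b,c}).ncard := by
  set X : Set V := {a,b,c} with hX
  have hmem : a ∈ X ∧ b ∈ X ∧ c ∈ X := by refine ⟨?_, ?_, ?_⟩ <;> simp [hX]
  have heq : edgeBoundary P X =
      ((fun w => s(a,w)) '' (P.neighborSet a \ X)) ∪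
      ((fun w => s(b,w)) '' (P.neighborSet b \ X)) ∪
      ((fun w => s(c,w)) '' (P.neighborSet c \ X)) := by
    ext e
    simp only [edgeBoundary, Set.mem_setOf_eq, Set.mem_union, Set.mem_image, Set.mem_diff,
      mem_neighborSet]
    constructor
    · rintro ⟨he, u, v, rfl, hu, hv⟩
      have hadj : P.Adj u v := P.mem_edgeSet.mp he
      rcases hu with rfl | rfl | rfl
      · exact Or.inl (Or.inl ⟨v, ⟨hadj, hv⟩, rfl⟩)
      · exact Or.inl (Or.inr ⟨v, ⟨hadj, hv⟩, rfl⟩)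
      · exact Or.inr ⟨v, ⟨hadj, hv⟩, rfl⟩
    · rintro ((⟨w, ⟨hadj, hw⟩, rfl⟩ | ⟨w, ⟨hadj, hw⟩, rfl⟩) | ⟨w, ⟨hadj, hw⟩, rfl⟩)
      · exact ⟨P.mem_edgeSet.mpr hadj, a, w, rfl, hmem.1, hw⟩
      · exact ⟨P.mem_edgeSet.mpr hadj, b, w, rfl, hmem.2.1, hw⟩
      · exact ⟨P.mem_edgeSet.mpr hadj, c, w, rfl, hmem.2.2, hw⟩
  have hdisj : ∀ x y : V, x ∈ X → y ∈ X → x ≠ y →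
      Disjoint ((fun w => s(x,w)) '' (P.neighborSet x \ X))
        ((fun w => s(y,w)) '' (P.neighborSet y \ X)) := by
    intro x y hx hy hxy
    rw [Set.disjoint_left]
    rintro e ⟨w, ⟨_, hw⟩, rfl⟩ ⟨w', ⟨_, hw'⟩, he⟩
    rcases Sym2.eq_iff.mp he with ⟨h1, h2⟩ | ⟨h1, h2⟩
    · exact hxy h1.symm
    · exact hw (h1 ▸ hy)
  have hinj : ∀ x : V, Function.Injective (fun w => s(x,w)) := by
    intro x w w' h
    exact Sym2.congr_right.mp h
  rw [heq,
    Set.ncard_union_eq (by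
      rw [Set.disjoint_union_left]
      exact ⟨hdisj a c hmem.1 hmem.2.2 hac, hdisj b c hmem.2.1 hmem.2.2 hbc⟩)
      (Set.toFinite _) (Set.toFinite _),
    Set.ncard_union_eq (hdisj a b hmem.1 hmem.2.1 hab) (Set.toFinite _) (Set.toFinite _),
    Set.ncard_image_of_injective _ (hinj a), Set.ncard_image_of_injective _ (hinj b),
    Set.ncard_image_of_injective _ (hinj c)]

lemma diff_ncard [Fintype V] (N X : Set V) : (N \ X).ncard = N.ncard - (N ∩ X).ncard := by
  rw [← Set.diff_self_inter]
  exact Set.ncard_diff Set.inter_subset_left (Set.toFinite _)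

lemma inter_subset_pair (P : SimpleGraph V) (a b c : V) :
    P.neighborSet a ∩ {a,b,c} ⊆ {b,c} := by
  rintro w ⟨hw, (rfl | h)⟩
  · exact absurd hw (P.irrefl (v := w))
  · exact h

lemma ncard_inter_le_two [Fintype V] (P : SimpleGraph V) (a b c : V) :
    (P.neighborSet a ∩ {a,b,c}).ncard ≤ 2 := by
  refine (Set.ncard_le_ncard (inter_subset_pair P a b c) (Set.toFinite _)).trans ?_
  exact (Set.ncard_insert_le _ _).trans (by simp)

lemma ncard_inter_le_one [Fintype V] (P : SimpleGraph V) (a b c : V) (hnab : ¬ P.Adj a b) :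
    (P.neighborSet a ∩ {a,b,c}).ncard ≤ 1 := by
  have hsub : P.neighborSet a ∩ {a,b,c} ⊆ {c} := by
    rintro w ⟨hw, (rfl | rfl | h)⟩
    · exact absurd hw (P.irrefl (v := w))
    · exact absurd hw hnab
    · exact h
  exact (Set.ncard_le_ncard hsub (Set.toFinite _)).trans (by simp)

lemma inter_eq_pair (P : SimpleGraph V) (a b c : V) (hb : P.Adj a b) (hc : P.Adj a c) :
    P.neighborSet a ∩ {a,b,c} = {b,c} := by
  apply Set.Subset.antisymm (inter_subset_pair P a b c)
  rintro w (rfl | rfl)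
  · exact ⟨hb, by simp⟩
  · exact ⟨hc, by simp⟩

lemma inter_eq_single (P : SimpleGraph V) (a b c : V) (hb : P.Adj a b) (hc : ¬ P.Adj a c) :
    P.neighborSet a ∩ {a,b,c} = {b} := by
  ext w
  constructor
  · rintro ⟨hw, (rfl | rfl | rfl)⟩
    · exact absurd hw (P.irrefl (v := w))
    · rfl
    · exact absurd hw hc
  · rintro rfl
    exact ⟨hb, by simp⟩

lemma induce_conn_three (P : SimpleGraph V) (a b c : V) (hab : P.Adj a b) (hbc : P.Adj b c) :
    (P.induce ({a,b,c} : Set V)).Connected := by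
  rw [connected_iff]
  have hbm : b ∈ ({a,b,c} : Set V) := by simp
  have key : ∀ x : ({a,b,c} : Set V), (P.induce {a,b,c}).Reachable x ⟨b, hbm⟩ := by
    rintro ⟨x, hx⟩
    rcases hx with rfl | rfl | rfl
    · exact Adj.reachable hab
    · exact Reachable.refl _
    · exact Adj.reachable hbc.symm
  exact ⟨fun x y => (key x).trans (key y).symm, ⟨⟨b, hbm⟩⟩⟩

lemma tri_bac {V : Type*} (a b c : V) : ({a,b,c} : Set V) = {b,a,c} := Set.insert_comm a b {c}
lemma tri_acb {V : Type*} (a b c : V) : ({a,b,c} : Set V) = {a,c,b} := by rw [Set.pair_comm b c]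
lemma tri_cab {V : Type*} (a b c : V) : ({a,b,c} : Set V) = {c,a,b} := by
  rw [tri_acb, Set.insert_comm]
lemma tri_bca {V : Type*} (a b c : V) : ({a,b,c} : Set V) = {b,c,a} := by
  rw [tri_bac, tri_acb]
lemma tri_cba {V : Type*} (a b c : V) : ({a,b,c} : Set V) = {c,b,a} := by
  rw [tri_cab, tri_acb]

end AuxStmt10

set_option maxHeartbeats 1000000 in
/-- For a graph G of order m ≥ 5 with δ(G) ≥ 2 and n ≥ 4,
ξ₃(G ⊠ Cₙ) = 9δ(G) if ξ(G) = 2δ(G) - 2, and ξ₃(G ⊠ Cₙ) = 9δ(G) + 2 if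
ξ(G) > 2δ(G) - 2. -/
theorem stmt10 {α : Type*} [Fintype α] (G : SimpleGraph α) (n : ℕ)
    (hm : 5 ≤ Fintype.card α) (hδ : 2 ≤ minDeg G) (hn : 4 ≤ n) :
    (xiMin G = 2 * minDeg G - 2 →
      xi3 (strongProd G (cycleGraph n)) = 9 * minDeg G) ∧
    (2 * minDeg G - 2 < xiMin G →
      xi3 (strongProd G (cycleGraph n)) = 9 * minDeg G + 2) := by
  obtain ⟨m, rfl⟩ : ∃ m, n = m + 4 := ⟨n - 4, by omega⟩
  have hne : Nonempty α := Fintype.card_pos_iff.mp (by omega)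
  set δ := minDeg G with hδdef
  set P := strongProd G (cycleGraph (m+4)) with hPdef
  have hdeg_ge : ∀ v, δ ≤ deg G v := fun v => Nat.sInf_le ⟨v, rfl⟩
  obtain ⟨u0, hu0⟩ : ∃ v, deg G v = δ :=
    Nat.sInf_mem (⟨deg G (Classical.arbitrary α), ⟨_, rfl⟩⟩ :
      {k | ∃ v, deg G v = k}.Nonempty)
  have hdegP : ∀ (u : α) (i : Fin (m+4)), (P.neighborSet (u,i)).ncard = 3 * deg G u + 2 :=
    fun u i => prod_deg G u i
  -- lower bounds
  have hbound : ∀ k : ℕ, (∃ X : Set (α × Fin (m+4)), X.ncard = 3 ∧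
      (P.induce X).Connected ∧ k = (edgeBoundary P X).ncard) →
      9 * δ ≤ k ∧ (2 * δ - 2 < xiMin G → 9 * δ + 2 ≤ k) := by
    rintro k ⟨X, hX3, hconn, rfl⟩
    obtain ⟨a, b, c, hab, hac, hbc, rfl⟩ := Set.ncard_eq_three.mp hX3
    obtain ⟨ua, ia⟩ := a
    obtain ⟨ub, ib⟩ := b
    obtain ⟨uc, ic⟩ := c
    rw [boundary_three P _ _ _ hab hac hbc]
    have hXb : ({(ua,ia),(ub,ib),(uc,ic)} : Set (α × Fin (m+4))) = {(ub,ib),(ua,ia),(uc,ic)} :=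
      tri_bac _ _ _
    have hXc : ({(ua,ia),(ub,ib),(uc,ic)} : Set (α × Fin (m+4))) = {(uc,ic),(ua,ia),(ub,ib)} :=
      tri_cab _ _ _
    have hta := diff_ncard (P.neighborSet (ua,ia)) ({(ua,ia),(ub,ib),(uc,ic)} : Set _)
    have htb := diff_ncard (P.neighborSet (ub,ib)) ({(ua,ia),(ub,ib),(uc,ic)} : Set _)
    have htc := diff_ncard (P.neighborSet (uc,ic)) ({(ua,ia),(ub,ib),(uc,ic)} : Set _)
    have hNa := hdegP ua ia
    have hNb := hdegP ub ib
    have hNc := hdegP uc ic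
    have h2a : (P.neighborSet (ua,ia) ∩ {(ua,ia),(ub,ib),(uc,ic)}).ncard ≤ 2 :=
      ncard_inter_le_two P _ _ _
    have h2b : (P.neighborSet (ub,ib) ∩ {(ua,ia),(ub,ib),(uc,ic)}).ncard ≤ 2 := by
      rw [hXb]; exact ncard_inter_le_two P _ _ _
    have h2c : (P.neighborSet (uc,ic) ∩ {(ua,ia),(ub,ib),(uc,ic)}).ncard ≤ 2 := by
      rw [hXc]; exact ncard_inter_le_two P _ _ _
    have hga := hdeg_ge ua
    have hgb := hdeg_ge ub
    have hgc := hdeg_ge uc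
    constructor
    · omega
    · intro hξ
      by_cases htri : P.Adj (ua,ia) (ub,ib) ∧ P.Adj (ua,ia) (uc,ic) ∧ P.Adj (ub,ib) (uc,ic)
      · have hdegbig : δ + 1 ≤ deg G ua ∨ δ + 1 ≤ deg G ub ∨ δ + 1 ≤ deg G uc := by
          by_contra hcon
          push_neg at hcon
          obtain ⟨h1, h2, h3⟩ := hcon
          have hda : deg G ua = δ := by omega
          have hdb : deg G ub = δ := by omega
          have hdc : deg G uc = δ := by omega
          have hxile : ∀ x y : α, G.Adj x y → deg G x = δ → deg G y = δ → False := by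
            intro x y hxy hx hy
            have hle : xiMin G ≤ deg G x + deg G y - 2 := Nat.sInf_le ⟨x, y, hxy, rfl⟩
            rw [hx, hy] at hle
            omega
          have hfst : ∀ p q : α × Fin (m+4), P.Adj p q → p.1 = q.1 ∨ G.Adj p.1 q.1 := by
            rintro p q (⟨h,_⟩|⟨_,h⟩|⟨h,_⟩)
            exacts [Or.inl h, Or.inr h, Or.inr h]
          have hsnd : ∀ p q : α × Fin (m+4), P.Adj p q → p.1 = q.1 →
              (cycleGraph (m+4)).Adj p.2 q.2 := by
            rintro p q (⟨_,h⟩|⟨_,h⟩|⟨_,h'⟩) he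
            · exact h
            · rw [he] at h; exact absurd h G.irrefl
            · exact h'
          rcases hfst _ _ htri.1 with e1 | e1
          · rcases hfst _ _ htri.2.1 with e2 | e2
            · rcases hfst _ _ htri.2.2 with e3 | e3
              · exact cyc_triangle_free ia ib ic (hsnd _ _ htri.1 e1)
                  (hsnd _ _ htri.2.2 e3) (hsnd _ _ htri.2.1 e2)
              · exact hxile _ _ e3 hdb hdc
            · exact hxile _ _ e2 hda hdc
          · exact hxile _ _ e1 hda hdb
        omega
      · have hcase : ¬ P.Adj (ua,ia) (ub,ib) ∨ ¬ P.Adj (ua,ia) (uc,ic) ∨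
            ¬ P.Adj (ub,ib) (uc,ic) := by tauto
        rcases hcase with hno | hno | hno
        · have h1a : (P.neighborSet (ua,ia) ∩ {(ua,ia),(ub,ib),(uc,ic)}).ncard ≤ 1 :=
            ncard_inter_le_one P _ _ _ hno
          have h1b : (P.neighborSet (ub,ib) ∩ {(ua,ia),(ub,ib),(uc,ic)}).ncard ≤ 1 := by
            rw [hXb]; exact ncard_inter_le_one P _ _ _ (fun h => hno h.symm)
          omega
        · have hXa' : ({(ua,ia),(ub,ib),(uc,ic)} : Set (α × Fin (m+4))) =
              {(ua,ia),(uc,ic),(ub,ib)} := tri_acb _ _ _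
          have h1a : (P.neighborSet (ua,ia) ∩ {(ua,ia),(ub,ib),(uc,ic)}).ncard ≤ 1 := by
            rw [hXa']; exact ncard_inter_le_one P _ _ _ hno
          have h1c : (P.neighborSet (uc,ic) ∩ {(ua,ia),(ub,ib),(uc,ic)}).ncard ≤ 1 := by
            rw [hXc]; exact ncard_inter_le_one P _ _ _ (fun h => hno h.symm)
          omega
        · have hXb' : ({(ua,ia),(ub,ib),(uc,ic)} : Set (α × Fin (m+4))) =
              {(ub,ib),(uc,ic),(ua,ia)} := tri_bca _ _ _
          have hXc' : ({(ua,ia),(ub,ib),(uc,ic)} : Set (α × Fin (m+4))) =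
              {(uc,ic),(ub,ib),(ua,ia)} := tri_cba _ _ _
          have h1b : (P.neighborSet (ub,ib) ∩ {(ua,ia),(ub,ib),(uc,ic)}).ncard ≤ 1 := by
            rw [hXb']; exact ncard_inter_le_one P _ _ _ hno
          have h1c : (P.neighborSet (uc,ic) ∩ {(ua,ia),(ub,ib),(uc,ic)}).ncard ≤ 1 := by
            rw [hXc']; exact ncard_inter_le_one P _ _ _ (fun h => hno h.symm)
          omega
  constructor
  · -- case ξ(G) = 2δ - 2
    intro hξ
    obtain ⟨w0, hw0⟩ : ∃ w, G.Adj u0 w := by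
      have hpos : 0 < (G.neighborSet u0).ncard := by
        have : (G.neighborSet u0).ncard = deg G u0 := rfl
        omega
      obtain ⟨w, hw⟩ := (Set.ncard_pos (Set.toFinite _)).mp hpos
      exact ⟨w, hw⟩
    obtain ⟨u, v, huv, hxie⟩ : ∃ x y, G.Adj x y ∧ xiMin G = deg G x + deg G y - 2 :=
      Nat.sInf_mem (⟨deg G u0 + deg G w0 - 2, u0, w0, hw0, rfl⟩ :
        {k | ∃ x y, G.Adj x y ∧ k = deg G x + deg G y - 2}.Nonempty)
    have hgu := hdeg_ge u
    have hgv := hdeg_ge v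
    have hdu : deg G u = δ ∧ deg G v = δ := by
      rw [hξ] at hxie
      omega
    have h01 : (0 : Fin (m+4)) ≠ 1 := fun h => Nat.zero_ne_one (congrArg Fin.val h)
    have huvne : u ≠ v := G.ne_of_adj huv
    have hadj_ab : P.Adj (u, (0 : Fin (m+4))) (u, 1) := Or.inl ⟨rfl, cyc_adj_01⟩
    have hadj_ac : P.Adj (u, (0 : Fin (m+4))) (v, 0) := Or.inr (Or.inl ⟨rfl, huv⟩)
    have hadj_bc : P.Adj (u, (1 : Fin (m+4))) (v, 0) := Or.inr (Or.inr ⟨huv, cyc_adj_01.symm⟩)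
    have hne_ab : ((u, (0 : Fin (m+4))) : α × Fin (m+4)) ≠ (u, 1) :=
      fun h => h01 (congrArg Prod.snd h)
    have hne_ac : ((u, (0 : Fin (m+4))) : α × Fin (m+4)) ≠ (v, 0) :=
      fun h => huvne (congrArg Prod.fst h)
    have hne_bc : ((u, (1 : Fin (m+4))) : α × Fin (m+4)) ≠ (v, 0) :=
      fun h => huvne (congrArg Prod.fst h)
    have hmem3 : ({(u,0),(u,1),(v,0)} : Set (α × Fin (m+4))).ncard = 3 :=
      Set.ncard_eq_three.mpr ⟨_, _, _, hne_ab, hne_ac, hne_bc, rfl⟩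
    have hconn3 := induce_conn_three P _ _ _ hadj_ab hadj_bc
    have hbval : (edgeBoundary P ({(u,0),(u,1),(v,0)} : Set (α × Fin (m+4)))).ncard = 9 * δ := by
      rw [boundary_three P _ _ _ hne_ab hne_ac hne_bc]
      have hXb : ({(u,0),(u,1),(v,0)} : Set (α × Fin (m+4))) = {(u,1),(u,0),(v,0)} := tri_bac _ _ _
      have hXc : ({(u,0),(u,1),(v,0)} : Set (α × Fin (m+4))) = {(v,0),(u,0),(u,1)} := tri_cab _ _ _
      have hta := diff_ncard (P.neighborSet (u,0)) ({(u,0),(u,1),(v,0)} : Set _)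
      have htb := diff_ncard (P.neighborSet (u,1)) ({(u,0),(u,1),(v,0)} : Set _)
      have htc := diff_ncard (P.neighborSet (v,0)) ({(u,0),(u,1),(v,0)} : Set _)
      have hia : (P.neighborSet (u,(0:Fin (m+4))) ∩ {(u,0),(u,1),(v,0)}).ncard = 2 := by
        rw [inter_eq_pair P _ _ _ hadj_ab hadj_ac]
        exact Set.ncard_pair hne_bc
      have hib : (P.neighborSet (u,(1:Fin (m+4))) ∩ {(u,0),(u,1),(v,0)}).ncard = 2 := by
        rw [hXb, inter_eq_pair P _ _ _ hadj_ab.symm hadj_bc]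
        exact Set.ncard_pair hne_ac
      have hic : (P.neighborSet (v,(0:Fin (m+4))) ∩ {(u,0),(u,1),(v,0)}).ncard = 2 := by
        rw [hXc, inter_eq_pair P _ _ _ hadj_ac.symm hadj_bc.symm]
        exact Set.ncard_pair hne_ab
      have hNa := hdegP u 0
      have hNb := hdegP u 1
      have hNc := hdegP v 0
      omega
    have hm9 : ∃ X : Set (α × Fin (m+4)), X.ncard = 3 ∧ (P.induce X).Connected ∧
        9 * δ = (edgeBoundary P X).ncard :=
      ⟨_, hmem3, hconn3, hbval.symm⟩
    exact le_antisymm (Nat.sInf_le hm9)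
      (le_csInf ⟨_, hm9⟩ fun k hk => (hbound k hk).1)
  · -- case ξ(G) > 2δ - 2
    intro hξ
    have h01 : (0 : Fin (m+4)) ≠ 1 := fun h => Nat.zero_ne_one (congrArg Fin.val h)
    have h02 : (0 : Fin (m+4)) ≠ 2 := by
      intro h
      have := congrArg Fin.val h
      have e2 : (2 : Fin (m+4)).val = 2 := rfl
      have e0 : (0 : Fin (m+4)).val = 0 := rfl
      omega
    have h12 : (1 : Fin (m+4)) ≠ 2 := by
      intro h
      have := congrArg Fin.val h
      have e2 : (2 : Fin (m+4)).val = 2 := rfl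
      have e1 : (1 : Fin (m+4)).val = 1 := rfl
      omega
    have hadj_ab : P.Adj (u0, (0 : Fin (m+4))) (u0, 1) := Or.inl ⟨rfl, cyc_adj_01⟩
    have hadj_bc : P.Adj (u0, (1 : Fin (m+4))) (u0, 2) := Or.inl ⟨rfl, cyc_adj_12⟩
    have hnadj_ac : ¬ P.Adj (u0, (0 : Fin (m+4))) (u0, 2) := by
      rintro (⟨_, h⟩ | ⟨h, _⟩ | ⟨h, _⟩)
      · exact cyc_not_adj_02 h
      · exact h02 h
      · exact absurd h G.irrefl
    have hne_ab : ((u0, (0 : Fin (m+4))) : α × Fin (m+4)) ≠ (u0, 1) :=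
      fun h => h01 (congrArg Prod.snd h)
    have hne_ac : ((u0, (0 : Fin (m+4))) : α × Fin (m+4)) ≠ (u0, 2) :=
      fun h => h02 (congrArg Prod.snd h)
    have hne_bc : ((u0, (1 : Fin (m+4))) : α × Fin (m+4)) ≠ (u0, 2) :=
      fun h => h12 (congrArg Prod.snd h)
    have hmem3 : ({(u0,0),(u0,1),(u0,2)} : Set (α × Fin (m+4))).ncard = 3 :=
      Set.ncard_eq_three.mpr ⟨_, _, _, hne_ab, hne_ac, hne_bc, rfl⟩
    have hconn3 := induce_conn_three P _ _ _ hadj_ab hadj_bc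
    have hbval : (edgeBoundary P ({(u0,0),(u0,1),(u0,2)} : Set (α × Fin (m+4)))).ncard =
        9 * δ + 2 := by
      rw [boundary_three P _ _ _ hne_ab hne_ac hne_bc]
      have hXb : ({(u0,0),(u0,1),(u0,2)} : Set (α × Fin (m+4))) = {(u0,1),(u0,0),(u0,2)} := tri_bac _ _ _
      have hXc : ({(u0,0),(u0,1),(u0,2)} : Set (α × Fin (m+4))) = {(u0,2),(u0,1),(u0,0)} := tri_cba _ _ _
      have hta := diff_ncard (P.neighborSet (u0,0)) ({(u0,0),(u0,1),(u0,2)} : Set _)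
      have htb := diff_ncard (P.neighborSet (u0,1)) ({(u0,0),(u0,1),(u0,2)} : Set _)
      have htc := diff_ncard (P.neighborSet (u0,2)) ({(u0,0),(u0,1),(u0,2)} : Set _)
      have hia : (P.neighborSet (u0,(0:Fin (m+4))) ∩ {(u0,0),(u0,1),(u0,2)}).ncard = 1 := by
        rw [inter_eq_single P _ _ _ hadj_ab hnadj_ac]
        exact Set.ncard_singleton _
      have hib : (P.neighborSet (u0,(1:Fin (m+4))) ∩ {(u0,0),(u0,1),(u0,2)}).ncard = 2 := by
        rw [hXb, inter_eq_pair P _ _ _ hadj_ab.symm hadj_bc]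
        exact Set.ncard_pair hne_ac
      have hic : (P.neighborSet (u0,(2:Fin (m+4))) ∩ {(u0,0),(u0,1),(u0,2)}).ncard = 1 := by
        rw [hXc, inter_eq_single P _ _ _ hadj_bc.symm (fun h => hnadj_ac h.symm)]
        exact Set.ncard_singleton _
      have hNa := hdegP u0 0
      have hNb := hdegP u0 1
      have hNc := hdegP u0 2
      omega
    have hm9 : ∃ X : Set (α × Fin (m+4)), X.ncard = 3 ∧ (P.induce X).Connected ∧
        9 * δ + 2 = (edgeBoundary P X).ncard :=
      ⟨_, hmem3, hconn3, hbval.symm⟩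
    exact le_antisymm (Nat.sInf_le hm9)
      (le_csInf ⟨_, hm9⟩ fun k hk => (hbound k hk).2 hξ)
end

section
/- Let G be a connected simple graph of order m ≥ 3 and let n ≥ 4. Then ξ₃(G ⊠ Kₙ) = 3n·δ(G) + 3n − 9, where Kₙ is the complete graph on n vertices. -/
open SimpleGraph

variable {V : Type*}

-- product ncard
lemma ncard_prod' {α β : Type*} (s : Set α) (t : Set β) :
    (s ×ˢ t).ncard = s.ncard * t.ncard := by
  rw [← Nat.card_coe_set_eq, ← Nat.card_coe_set_eq, ← Nat.card_coe_set_eq,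
    ← Nat.card_prod]
  exact Nat.card_congr (Equiv.Set.prod s t)

lemma neighborSet_strongProd {α : Type*} (G : SimpleGraph α) (n : ℕ) (v : α) (i : Fin n) :
    (strongProd G (completeGraph (Fin n))).neighborSet (v, i)
      = (({v} : Set α) ×ˢ {j | j ≠ i}) ∪ (G.neighborSet v ×ˢ Set.univ) := by
  ext ⟨u, j⟩
  simp only [mem_neighborSet, strongProd, completeGraph, top_adj, Set.mem_union,
    Set.mem_prod, Set.mem_singleton_iff, Set.mem_setOf_eq, Set.mem_univ, and_true]
  constructor
  · rintro (⟨h1, h2⟩ | ⟨h1, h2⟩ | ⟨h1, h2⟩)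
    · exact Or.inl ⟨h1.symm, h2.symm⟩
    · exact Or.inr h2
    · exact Or.inr h1
  · rintro (⟨h1, h2⟩ | h1)
    · exact Or.inl ⟨h1.symm, h2.symm⟩
    · by_cases h : i = j
      · exact Or.inr (Or.inl ⟨h, h1⟩)
      · exact Or.inr (Or.inr ⟨h1, h⟩)

lemma deg_strongProd {α : Type*} [Fintype α] (G : SimpleGraph α) (n : ℕ) (v : α) (i : Fin n) :
    deg (strongProd G (completeGraph (Fin n))) (v, i) = deg G v * n + (n - 1) := by
  classical
  rw [deg, neighborSet_strongProd]
  have hdisj : Disjoint (({v} : Set α) ×ˢ {j : Fin n | j ≠ i})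
      (G.neighborSet v ×ˢ (Set.univ : Set (Fin n))) := by
    rw [Set.disjoint_left]
    rintro ⟨u, j⟩ ⟨hu, _⟩ ⟨hu', _⟩
    rw [Set.mem_singleton_iff] at hu
    subst hu
    exact G.irrefl hu'
  have huniv : (Set.univ : Set (Fin n)).ncard = n := by
    rw [Set.ncard_univ, Nat.card_eq_fintype_card, Fintype.card_fin]
  have h1 : ({j : Fin n | j ≠ i}).ncard = n - 1 := by
    have he : {j : Fin n | j ≠ i} = Set.univ \ {i} := by ext j; simp
    rw [he, Set.ncard_diff (Set.subset_univ _) (Set.toFinite _), huniv, Set.ncard_singleton]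
  rw [Set.ncard_union_eq hdisj (Set.toFinite _) (Set.toFinite _), ncard_prod', ncard_prod',
    h1, huniv, Set.ncard_singleton, one_mul]
  unfold deg
  omega

-- boundary decomposition
lemma edgeBoundary_ncard_eq {W : Type*} [Fintype W] (G' : SimpleGraph W) (a b c : W)
    (hab : a ≠ b) (hac : a ≠ c) (hbc : b ≠ c) :
    (edgeBoundary G' {a, b, c}).ncard =
      (G'.neighborSet a \ {a, b, c}).ncard + (G'.neighborSet b \ {a, b, c}).ncard +
      (G'.neighborSet c \ {a, b, c}).ncard := by
  classical
  set X : Set W := {a, b, c} with hX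
  set S : W → Set (Sym2 W) := fun x => (fun y => s(x, y)) '' (G'.neighborSet x \ X) with hS
  have hdecomp : edgeBoundary G' X = S a ∪ S b ∪ S c := by
    ext e
    simp only [edgeBoundary, Set.mem_setOf_eq, Set.mem_union, hS, Set.mem_image,
      Set.mem_diff, mem_neighborSet]
    constructor
    · rintro ⟨he, u, w, rfl, hu, hw⟩
      rw [mem_edgeSet] at he
      have : u = a ∨ u = b ∨ u = c := hu
      rcases this with rfl | rfl | rfl
      · exact Or.inl (Or.inl ⟨w, ⟨he, hw⟩, rfl⟩)
      · exact Or.inl (Or.inr ⟨w, ⟨he, hw⟩, rfl⟩)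
      · exact Or.inr ⟨w, ⟨he, hw⟩, rfl⟩
    · rintro ((⟨y, ⟨hy1, hy2⟩, rfl⟩ | ⟨y, ⟨hy1, hy2⟩, rfl⟩) | ⟨y, ⟨hy1, hy2⟩, rfl⟩)
      · exact ⟨by rwa [mem_edgeSet], a, y, rfl, by simp [hX], hy2⟩
      · exact ⟨by rwa [mem_edgeSet], b, y, rfl, by simp [hX], hy2⟩
      · exact ⟨by rwa [mem_edgeSet], c, y, rfl, by simp [hX], hy2⟩
  have hSdisj : ∀ x x' : W, x ∈ X → x ≠ x' → Disjoint (S x) (S x') := by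
    intro x x' hx hne
    rw [Set.disjoint_left]
    rintro e ⟨y, ⟨hy1, hy2⟩, rfl⟩ ⟨y', ⟨hy1', hy2'⟩, heq⟩
    rw [Sym2.eq_iff] at heq
    rcases heq with ⟨h1, h2⟩ | ⟨h1, h2⟩
    · exact hne h1.symm
    · exact hy2' (h2 ▸ hx)
  have hScard : ∀ x : W, (S x).ncard = (G'.neighborSet x \ X).ncard := by
    intro x
    apply Set.ncard_image_of_injOn
    rintro y ⟨hy1, _⟩ y' ⟨hy1', _⟩ heq
    rw [Sym2.eq_iff] at heq
    rcases heq with ⟨_, h2⟩ | ⟨h1, h2⟩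
    · exact h2
    · exfalso; rw [← h1] at hy1'; exact G'.irrefl hy1'
  rw [hdecomp,
    Set.ncard_union_eq (by
      rw [Set.disjoint_union_left]
      exact ⟨hSdisj a c (by simp [hX]) hac, hSdisj b c (by simp [hX]) hbc⟩)
      (Set.toFinite _) (Set.toFinite _),
    Set.ncard_union_eq (hSdisj a b (by simp [hX]) hab) (Set.toFinite _) (Set.toFinite _),
    hScard, hScard, hScard]

lemma ncard_nbr_diff_ge {W : Type*} [Fintype W] (G' : SimpleGraph W) (x : W) (X : Set W)
    (hX : X.ncard = 3) (hx : x ∈ X) :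
    deg G' x ≤ (G'.neighborSet x \ X).ncard + 2 := by
  classical
  have h1 : G'.neighborSet x \ X = G'.neighborSet x \ (X \ {x}) := by
    ext y
    simp only [Set.mem_diff, mem_neighborSet, Set.mem_singleton_iff]
    constructor
    · rintro ⟨h, hy⟩; exact ⟨h, fun hh => hy hh.1⟩
    · rintro ⟨h, hy⟩
      have hadj : G'.Adj x y := h
      exact ⟨h, fun hh => hy ⟨hh, fun he => G'.ne_of_adj hadj he.symm⟩⟩
  have h2 : (X \ {x}).ncard = 2 := by
    rw [Set.ncard_diff (by simpa using hx) (Set.toFinite _), hX, Set.ncard_singleton]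
  have h3 := Set.le_ncard_diff (X \ {x}) (G'.neighborSet x) (Set.toFinite _)
  rw [← h1, h2] at h3
  unfold deg
  omega

/-- For a connected graph G of order m ≥ 3 and n ≥ 4,
ξ₃(G ⊠ Kₙ) = 3nδ(G) + 3n - 9. -/
theorem stmt11 {α : Type*} [Fintype α] (G : SimpleGraph α) (n : ℕ)
    (hG : G.Connected) (hm : 3 ≤ Fintype.card α) (hn : 4 ≤ n) :
    xi3 (strongProd G (completeGraph (Fin n))) = 3 * n * minDeg G + 3 * n - 9 := by
  classical
  set GK := strongProd G (completeGraph (Fin n)) with hGK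
  have hne : Nonempty α := Fintype.card_pos_iff.mp (by omega)
  obtain ⟨v, hv⟩ : ∃ v, deg G v = minDeg G :=
    Nat.sInf_mem (s := {k | ∃ v, deg G v = k}) ⟨deg G hne.some, hne.some, rfl⟩
  set d := minDeg G with hd
  set i0 : Fin n := ⟨0, by omega⟩ with hi0
  set i1 : Fin n := ⟨1, by omega⟩ with hi1
  set i2 : Fin n := ⟨2, by omega⟩ with hi2
  set A : α × Fin n := (v, i0) with hA
  set B : α × Fin n := (v, i1) with hB
  set C : α × Fin n := (v, i2) with hC
  have hAB : A ≠ B := by simp [hA, hB, hi0, hi1, Prod.ext_iff, Fin.ext_iff]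
  have hAC : A ≠ C := by simp [hA, hC, hi0, hi2, Prod.ext_iff, Fin.ext_iff]
  have hBC : B ≠ C := by simp [hB, hC, hi1, hi2, Prod.ext_iff, Fin.ext_iff]
  set X : Set (α × Fin n) := {A, B, C} with hXdef
  have hadj : ∀ p q : α × Fin n, p ∈ X → q ∈ X → p ≠ q → GK.Adj p q := by
    intro p q hp hq hpq
    simp only [hXdef, Set.mem_insert_iff, Set.mem_singleton_iff] at hp hq
    rcases hp with rfl | rfl | rfl <;> rcases hq with rfl | rfl | rfl <;>
      first
        | exact absurd rfl hpq
        | exact Or.inl ⟨rfl, by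
            simp only [hA, hB, hC, hi0, hi1, hi2, completeGraph, top_adj, ne_eq,
              Fin.mk.injEq]
            omega⟩
  have hX3 : X.ncard = 3 := Set.ncard_eq_three.mpr ⟨A, B, C, hAB, hAC, hBC, rfl⟩
  have hconn : (GK.induce X).Connected := by
    rw [connected_iff]
    refine ⟨fun u w => ?_, ⟨⟨A, by simp [hXdef]⟩⟩⟩
    by_cases h : u = w
    · exact h ▸ Reachable.refl u
    · exact SimpleGraph.Adj.reachable
        (hadj u.1 w.1 u.2 w.2 (fun hh => h (Subtype.ext hh)))
  -- exact count in the chosen layer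
  have hcount : ∀ p : α × Fin n, p ∈ X →
      (GK.neighborSet p \ X).ncard = d * n + (n - 1) - 2 := by
    intro p hp
    have hp' : p ∈ X := hp
    simp only [hXdef, Set.mem_insert_iff, Set.mem_singleton_iff] at hp'
    have key : ∀ (q r : α × Fin n) (j : Fin n), p = (v, j) → X = {p, q, r} → q ≠ r →
        (GK.neighborSet p \ X).ncard = d * n + (n - 1) - 2 := by
      intro q r j hpj hXqr hqr
      have hqmem : q ∈ X := by rw [hXqr]; simp
      have hrmem : r ∈ X := by rw [hXqr]; simp
      have hpq : p ≠ q := by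
        intro hh
        have h2 : X = insert q {r} := by rw [hXqr, hh]; ext z; simp; try tauto
        have h3 := Set.ncard_insert_le q ({r} : Set (α × Fin n))
        rw [← h2, hX3, Set.ncard_singleton] at h3
        omega
      have hpr : p ≠ r := by
        intro hh
        have h2 : X = insert q {r} := by rw [hXqr, hh]; ext z; simp; try tauto
        have h3 := Set.ncard_insert_le q ({r} : Set (α × Fin n))
        rw [← h2, hX3, Set.ncard_singleton] at h3
        omega
      have hsub : ({q, r} : Set (α × Fin n)) ⊆ GK.neighborSet p := by
        rintro z (rfl | rfl)
        · exact hadj p z hp hqmem hpq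
        · exact hadj p z hp hrmem hpr
      have hXA : GK.neighborSet p \ X = GK.neighborSet p \ {q, r} := by
        rw [hXqr]
        ext y
        simp only [Set.mem_diff, Set.mem_insert_iff, Set.mem_singleton_iff]
        constructor
        · rintro ⟨h1, h2⟩; exact ⟨h1, fun hh => h2 (Or.inr hh)⟩
        · rintro ⟨h1, h2⟩
          refine ⟨h1, fun hh => ?_⟩
          rcases hh with rfl | hh
          · exact GK.irrefl h1
          · exact h2 hh
      rw [hXA, Set.ncard_diff hsub (Set.toFinite _), Set.ncard_pair hqr]
      have hdeg : (GK.neighborSet p).ncard = d * n + (n - 1) := by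
        have := deg_strongProd G n v j
        rw [hv] at this
        rw [hpj]
        exact this
      rw [hdeg]
    rcases hp' with rfl | rfl | rfl
    · exact key B C i0 rfl rfl hBC
    · exact key A C i1 rfl (by ext z; simp [hXdef]; tauto) hAC
    · exact key A B i2 rfl (by ext z; simp [hXdef]; tauto) hAB
  have hval : (edgeBoundary GK X).ncard = 3 * n * d + 3 * n - 9 := by
    rw [hXdef, edgeBoundary_ncard_eq GK A B C hAB hAC hBC]
    rw [← hXdef]
    rw [hcount A (by simp [hXdef]), hcount B (by simp [hXdef]), hcount C (by simp [hXdef])]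
    have hr : 3 * n * d = 3 * (d * n) := by ring
    rw [hr]
    omega
  have hmem : (3 * n * d + 3 * n - 9) ∈ {k | ∃ Y : Set (α × Fin n), Y.ncard = 3 ∧
      (GK.induce Y).Connected ∧ k = (edgeBoundary GK Y).ncard} :=
    ⟨X, hX3, hconn, hval.symm⟩
  refine le_antisymm (Nat.sInf_le hmem) (le_csInf ⟨_, hmem⟩ ?_)
  rintro k ⟨Y, hY3, -, rfl⟩
  obtain ⟨a, b, c, hab, hac, hbc, rfl⟩ := Set.ncard_eq_three.mp hY3
  rw [edgeBoundary_ncard_eq GK a b c hab hac hbc]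
  have ha := ncard_nbr_diff_ge GK a {a, b, c} hY3 (by simp)
  have hb := ncard_nbr_diff_ge GK b {a, b, c} hY3 (by simp)
  have hc := ncard_nbr_diff_ge GK c {a, b, c} hY3 (by simp)
  obtain ⟨va, ja⟩ := a
  obtain ⟨vb, jb⟩ := b
  obtain ⟨vc, jc⟩ := c
  have hda : deg GK (va, ja) = deg G va * n + (n - 1) := deg_strongProd G n va ja
  have hdb : deg GK (vb, jb) = deg G vb * n + (n - 1) := deg_strongProd G n vb jb
  have hdc : deg GK (vc, jc) = deg G vc * n + (n - 1) := deg_strongProd G n vc jc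
  have hla : d ≤ deg G va := Nat.sInf_le ⟨va, rfl⟩
  have hlb : d ≤ deg G vb := Nat.sInf_le ⟨vb, rfl⟩
  have hlc : d ≤ deg G vc := Nat.sInf_le ⟨vc, rfl⟩
  have hma : d * n ≤ deg G va * n := Nat.mul_le_mul_right n hla
  have hmb : d * n ≤ deg G vb * n := Nat.mul_le_mul_right n hlb
  have hmc : d * n ≤ deg G vc * n := Nat.mul_le_mul_right n hlc
  have hr : 3 * n * d = 3 * (d * n) := by ring
  rw [hr]
  omega
end
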